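/- arXiv:1812.03476 — 7 statements merged into one kernel-verified Lean document; each statement's English description precedes it below -/
import Mathlib

section
/- Every generalized net is P_4-sparse: every set of five vertices induces at most one copy of the path P_4. -/
/-!
In a generalized net with `n ≥ 3`, an induced `P₄` is triangle-free, so it contains at most two
vertices of the clique and hence at least two satellites; having no isolated vertex, it contains
the unique neighbour of each of them. So it consists of exactly two of the three pendant edges.
Two different such `P₄`s together use all three pendant edges, i.e. six vertices, which do not fit
into five.
-/

/-- The generalized net: the complete graph `K n` on vertices `0, …, n-1` together with three
satellite vertices `n, n+1, n+2` attached by single edges to the distinct body vertices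
`0, 1, 2` respectively. -/
def genNet (n : ℕ) : SimpleGraph (Fin (n + 3)) :=
  SimpleGraph.fromRel (fun i j =>
    ((i : ℕ) < n ∧ (j : ℕ) < n) ∨
    ((i : ℕ) = n ∧ (j : ℕ) = 0) ∨
    ((i : ℕ) = n + 1 ∧ (j : ℕ) = 1) ∨
    ((i : ℕ) = n + 2 ∧ (j : ℕ) = 2))

open Finset

namespace SimpleGraph

variable {V W : Type*} {G : SimpleGraph V} {H : SimpleGraph W} {s : Set V} {n : ℕ}

theorem CliqueFreeOn.card_lt_of_isClique {t : Finset V} (h : G.CliqueFreeOn s n) (hts : ↑t ⊆ s)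
    (ht : G.IsClique (t : Set V)) : #t < n := by
  by_contra! hnt
  obtain ⟨u, hut, hu⟩ := exists_subset_card_eq hnt
  exact h ((coe_subset.2 hut).trans hts) ⟨ht.subset (coe_subset.2 hut), hu⟩

theorem Iso.cliqueFreeOn_of_induce (e : G.induce s ≃g H) (hH : H.CliqueFree n) :
    G.CliqueFreeOn s n :=
  (G.cliqueFree_induce_iff s n).1 (hH.comap e.isContained)

theorem Iso.exists_adj_of_induce (e : G.induce s ≃g H) (hH : ∀ w, ∃ w', H.Adj w w') {x : V}
    (hx : x ∈ s) : ∃ y ∈ s, G.Adj x y := by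
  obtain ⟨w, hw⟩ := hH (e ⟨x, hx⟩)
  refine ⟨e.symm w, (e.symm w).2, ?_⟩
  simpa using e.symm.map_adj_iff.2 hw

theorem pathGraph_exists_adj (n : ℕ) (v : Fin (n + 2)) : ∃ w, (pathGraph (n + 2)).Adj v w :=
  (pathGraph_preconnected _).exists_adj_of_nontrivial v

end SimpleGraph

open SimpleGraph

namespace genNet

variable {n : ℕ}

theorem adj_of_lt {x y : Fin (n + 3)} (hx : (x : ℕ) < n) (hy : (y : ℕ) < n) (hxy : x ≠ y) :
    (genNet n).Adj x y :=
  (fromRel_adj ..).2 ⟨hxy, .inl (.inl ⟨hx, hy⟩)⟩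

theorem eq_of_adj_natAdd (hn : 3 ≤ n) {i : Fin 3} {y : Fin (n + 3)}
    (h : (genNet n).Adj (Fin.natAdd n i) y) : y = Fin.castLE (Nat.le_add_left 3 n) i := by
  obtain ⟨-, h⟩ := (fromRel_adj ..).1 h
  have := i.isLt
  ext
  simp only [Fin.val_natAdd, Fin.val_castLE] at h ⊢
  omega

/-- The satellite `Fin.natAdd n i` hangs off the body vertex `i`; `pendants n I` is the vertex set
of the pendant edges at the indices in `I`. -/
def pendants (n : ℕ) (I : Finset (Fin 3)) : Finset (Fin (n + 3)) :=
  I.image (Fin.natAdd n) ∪ I.image (Fin.castLE (Nat.le_add_left 3 n))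

theorem pendants_union (I J : Finset (Fin 3)) :
    pendants n (I ∪ J) = pendants n I ∪ pendants n J := by
  simp only [pendants, image_union]
  exact union_union_union_comm ..

theorem card_pendants (hn : 3 ≤ n) (I : Finset (Fin 3)) : #(pendants n I) = 2 * #I := by
  rw [pendants, card_union_of_disjoint, card_image_of_injective _ (Fin.natAdd_injective _ _),
    card_image_of_injective _ (Fin.castLE_injective _)]
  · ring
  · simp only [Finset.disjoint_left, mem_image]
    rintro _ ⟨i, -, rfl⟩ ⟨j, -, h⟩
    have := j.isLt
    simp only [Fin.ext_iff, Fin.val_castLE, Fin.val_natAdd] at h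
    omega

theorem eq_pendants_of_induce_iso_pathGraph (hn : 3 ≤ n) {T : Finset (Fin (n + 3))}
    (hT : #T = 4) (e : (genNet n).induce (T : Set (Fin (n + 3))) ≃g pathGraph 4) :
    ∃ I : Finset (Fin 3), #I = 2 ∧ T = pendants n I := by
  set I := univ.filter (fun i => Fin.natAdd n i ∈ T)
  have hpendants : pendants n I ⊆ T := by
    refine union_subset (fun x hx => ?_) (fun x hx => ?_) <;>
      obtain ⟨i, hi, rfl⟩ := mem_image.1 hx
    · exact (mem_filter.1 hi).2
    · obtain ⟨y, hy, hiy⟩ :=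
        e.exists_adj_of_induce (pathGraph_exists_adj 2) (mem_filter.1 hi).2
      rwa [← eq_of_adj_natAdd hn hiy]
  -- `P₄` is triangle-free, so `T` meets the clique `K_n` in at most two vertices.
  have hbody : #(T.filter (fun x : Fin (n + 3) => (x : ℕ) < n)) < 3 :=
    (e.cliqueFreeOn_of_induce cliqueFree_hasse_three).card_lt_of_isClique
      (coe_subset.2 (filter_subset _ _))
      fun x hx y hy hxy => adj_of_lt (mem_filter.1 hx).2 (mem_filter.1 hy).2 hxy
  have hcover :
      T ⊆ T.filter (fun x : Fin (n + 3) => (x : ℕ) < n) ∪ I.image (Fin.natAdd n) := by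
    intro x hx
    by_cases hxn : (x : ℕ) < n
    · exact mem_union_left _ (mem_filter.2 ⟨hx, hxn⟩)
    · have hx' : x = Fin.natAdd n ⟨x - n, by omega⟩ := by
        ext; simp only [Fin.val_natAdd]; omega
      exact mem_union_right _
        (mem_image.2 ⟨_, mem_filter.2 ⟨mem_univ _, hx' ▸ hx⟩, hx'.symm⟩)
  have hle := (card_le_card hcover).trans (card_union_le _ _)
  have hge := card_le_card hpendants
  rw [card_pendants hn] at hge
  have hI : #I = 2 := by have := card_image_le (s := I) (f := Fin.natAdd n); omega
  exact ⟨I, hI, (eq_of_subset_of_card_le hpendants (by rw [card_pendants hn, hI, hT])).symm⟩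

end genNet

/-- Every generalized net is `P₄`-sparse: among any five of its vertices there is at most one
four-element subset inducing a path `P₄`. -/
theorem genNet_P4sparse (n : ℕ) (hn : 3 ≤ n) (S : Finset (Fin (n + 3))) (hS : S.card = 5) :
    {T : Finset (Fin (n + 3)) | T ⊆ S ∧ T.card = 4 ∧
      Nonempty ((genNet n).induce (T : Set (Fin (n + 3))) ≃g SimpleGraph.pathGraph 4)}.Subsingleton := by
  rintro _ ⟨hT₁S, hT₁, ⟨e₁⟩⟩ _ ⟨hT₂S, hT₂, ⟨e₂⟩⟩
  obtain ⟨I, hI, rfl⟩ := genNet.eq_pendants_of_induce_iso_pathGraph hn hT₁ e₁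
  obtain ⟨J, hJ, rfl⟩ := genNet.eq_pendants_of_induce_iso_pathGraph hn hT₂ e₂
  have hIJ : #(I ∪ J) ≤ 2 := by
    have := card_le_card (genNet.pendants_union (n := n) I J ▸ union_subset hT₁S hT₂S)
    rw [genNet.card_pendants hn, hS] at this
    omega
  have hI' : I = I ∪ J := eq_of_subset_of_card_le subset_union_left (by omega)
  have hJ' : J = I ∪ J := eq_of_subset_of_card_le subset_union_right (by omega)
  rw [hI', ← hJ']
end

section
/- A graph G is a generalized spider with body of size n ≥ 3 if and only if G is isomorphic to the line graph of some spider. -/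
/-- The base relation for a generalized spider: body vertices are pairwise adjacent, the first
vertex of the leg at body vertex `i` is adjacent to `i`, and consecutive leg vertices are
adjacent. -/
def spiderRel (n : ℕ) (m : Fin n → ℕ) :
    (Fin n ⊕ Σ i : Fin n, Fin (m i)) → (Fin n ⊕ Σ i : Fin n, Fin (m i)) → Prop
  | Sum.inl _, Sum.inl _ => True
  | Sum.inl i, Sum.inr ⟨j, k⟩ => i = j ∧ (k : ℕ) = 0
  | Sum.inr ⟨i, k⟩, Sum.inr ⟨j, l⟩ => i = j ∧ (k : ℕ) + 1 = (l : ℕ)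
  | _, _ => False

/-- The generalized spider with body `K n` and a (possibly empty) path of length `m i` attached
at each body vertex `i`; each body vertex has degree at most `n`. -/
def genSpider (n : ℕ) (m : Fin n → ℕ) : SimpleGraph (Fin n ⊕ Σ i : Fin n, Fin (m i)) :=
  SimpleGraph.fromRel (spiderRel n m)

/-- A graph is a generalized spider with body of size `n` if it is isomorphic to some
`genSpider n m`. -/
def IsGenSpider {V : Type} (G : SimpleGraph V) (n : ℕ) : Prop :=
  ∃ m : Fin n → ℕ, Nonempty (G ≃g genSpider n m)

/-- A spider is a tree with exactly one vertex of degree at least `3`. -/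
def IsSpider {W : Type} (S : SimpleGraph W) : Prop :=
  S.IsTree ∧ ∃! v : W, 3 ≤ (S.neighborSet v).ncard

/-!
A tree on `Option α` rooted at `none` is the same thing as a parent map `p : α → Option α` that
decreases some rank. Its edges correspond to `α` (each edge to its lower endpoint), and two edges
meet iff they are siblings or one lies directly above the other. For the spider whose leg `i` has
`m i + 1` edges this is the adjacency of `genSpider n m`: the `n` edges at the centre form the
body clique and the other edges of leg `i` form the path hanging at body vertex `i`.

Conversely, in a spider with centre `c` no vertex other than `c` has two children, so a vertex
`v ≠ c` is determined by its branch (the neighbour of `c` on the path to `v`) and its distance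
to `c`. Hence every finite spider is one of the canonical ones above, with `n ≥ 3` legs.
-/

namespace SimpleGraph

section ParentGraph

variable {α : Type*}

def parentGraph (p : α → Option α) : SimpleGraph (Option α) :=
  fromRel fun u v => ∃ x, v = some x ∧ u = p x

variable {p : α → Option α}

lemma parentGraph_adj {u v : Option α} : (parentGraph p).Adj u v ↔
    u ≠ v ∧ ((∃ x, v = some x ∧ u = p x) ∨ ∃ x, u = some x ∧ v = p x) :=
  fromRel_adj ..

lemma neighborSet_parentGraph_none :
    (parentGraph p).neighborSet none = some '' {x | p x = none} := by
  ext (_ | x) <;> simp [parentGraph_adj, eq_comm]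

lemma neighborSet_parentGraph_some_subset (y : α) :
    (parentGraph p).neighborSet (some y) ⊆ insert (p y) (some '' {x | p x = some y}) := by
  rintro (_ | x) h <;> simp [parentGraph_adj] at h ⊢ <;> aesop

variable {r : α → ℕ}

lemma parentGraph_adj_parent (hr : ∀ x y, p x = some y → r y < r x) (x : α) :
    (parentGraph p).Adj (p x) (some x) :=
  parentGraph_adj.2 ⟨fun h => (hr x x h).false, Or.inl ⟨x, rfl, rfl⟩⟩

lemma parentGraph_reachable_none (hr : ∀ x y, p x = some y → r y < r x) :
    ∀ u, (parentGraph p).Reachable none u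
  | none => .rfl
  | some x =>
    match hx : p x with
    | none => (hx ▸ parentGraph_adj_parent hr x).reachable
    | some y => (parentGraph_reachable_none hr (some y)).trans
        (hx ▸ parentGraph_adj_parent hr x).reachable
termination_by u => u.elim 0 (r · + 1)
decreasing_by simpa using hr x y hx

def parentEdge (hr : ∀ x y, p x = some y → r y < r x) (x : α) : (parentGraph p).edgeSet :=
  ⟨s(p x, some x), parentGraph_adj_parent hr x⟩

lemma parentEdge_bijective (hr : ∀ x y, p x = some y → r y < r x) :
    (parentEdge hr).Bijective := by
  refine ⟨fun x y h => ?_, ?_⟩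
  · rcases Sym2.eq_iff.1 (Subtype.ext_iff.1 h) with ⟨-, h⟩ | ⟨hxy, hyx⟩
    · exact Option.some_injective _ h
    · exact absurd (hr _ _ hyx.symm) (hr _ _ hxy).asymm
  · rintro ⟨e, he⟩
    induction e using Sym2.ind with
    | _ u v =>
      rcases (parentGraph_adj.1 he).2 with ⟨x, rfl, rfl⟩ | ⟨x, rfl, rfl⟩
      · exact ⟨x, rfl⟩
      · exact ⟨x, Subtype.ext Sym2.eq_swap⟩

lemma lineGraph_parentGraph_adj (hr : ∀ x y, p x = some y → r y < r x) {x y : α} :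
    (parentGraph p).lineGraph.Adj (parentEdge hr x) (parentEdge hr y) ↔
      x ≠ y ∧ (p x = p y ∨ p x = some y ∨ p y = some x) := by
  rw [lineGraph_adj_iff_exists, (parentEdge_bijective hr).1.ne_iff]
  refine and_congr_right fun hxy => ?_
  simp only [parentEdge, Sym2.mem_iff]
  constructor
  · rintro ⟨v, rfl | rfl, h | h⟩ <;> simp_all
  · rintro (h | h | h)
    · exact ⟨p x, .inl rfl, .inl h⟩
    · exact ⟨p x, .inl rfl, .inr h⟩
    · exact ⟨some x, .inr rfl, .inl h.symm⟩

lemma parentGraph_isTree [Finite α] (hr : ∀ x y, p x = some y → r y < r x) :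
    (parentGraph p).IsTree := by
  rw [isTree_iff_connected_and_card, connected_iff_exists_forall_reachable,
    Nat.card_congr (Equiv.ofBijective _ (parentEdge_bijective hr)).symm, Finite.card_option]
  exact ⟨⟨none, parentGraph_reachable_none hr⟩, rfl⟩

end ParentGraph

section Legs

variable {ι : Type*} {f : ι → ℕ}

lemma sigma_fin_mk_eq_iff {i j : ι} {a : Fin (f i)} {b : Fin (f j)} :
    (⟨i, a⟩ : Σ i, Fin (f i)) = ⟨j, b⟩ ↔ i = j ∧ (a : ℕ) = b := by
  constructor
  · rintro ⟨⟩; simp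
  · rintro ⟨rfl, h⟩; rw [Fin.ext h]

variable (m : ι → ℕ)

/-- `⟨i, k⟩` is the vertex at distance `k + 1` from the centre `none` on leg `i`. -/
def legParent : (Σ i, Fin (m i + 1)) → Option (Σ i, Fin (m i + 1))
  | ⟨_, ⟨0, _⟩⟩ => none
  | ⟨i, ⟨k + 1, h⟩⟩ => some ⟨i, ⟨k, by omega⟩⟩

abbrev spiderOfLegs : SimpleGraph (Option (Σ i, Fin (m i + 1))) := parentGraph (legParent m)

variable {m}

lemma legParent_mk_zero (i : ι) : legParent m ⟨i, 0⟩ = none := rfl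

lemma legParent_mk_succ (i : ι) (k : Fin (m i)) :
    legParent m ⟨i, k.succ⟩ = some ⟨i, k.castSucc⟩ :=
  rfl

lemma legParent_eq_none {x : Σ i, Fin (m i + 1)} : legParent m x = none ↔ (x.2 : ℕ) = 0 := by
  obtain ⟨i, ⟨_ | k, hk⟩⟩ := x <;> simp [legParent]

lemma legParent_eq_some {x y : Σ i, Fin (m i + 1)} :
    legParent m x = some y ↔ x.1 = y.1 ∧ (x.2 : ℕ) = y.2 + 1 := by
  obtain ⟨i, ⟨_ | k, hk⟩⟩ := x <;> obtain ⟨j, l, hl⟩ := y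
  · simp [legParent]
  · rw [legParent, Option.some.injEq, sigma_fin_mk_eq_iff (f := fun i => m i + 1)]
    simp

lemma legParent_rank {x y : Σ i, Fin (m i + 1)} (h : legParent m x = some y) :
    (y.2 : ℕ) < x.2 := by
  have := (legParent_eq_some.1 h).2
  omega

lemma ncard_neighborSet_spiderOfLegs_none :
    ((spiderOfLegs m).neighborSet none).ncard = Nat.card ι := by
  have : {x | legParent m x = none} = Set.range fun i => ⟨i, 0⟩ := by
    ext ⟨i, k⟩
    simp [legParent_eq_none, sigma_fin_mk_eq_iff (f := fun i => m i + 1), eq_comm]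
  rw [neighborSet_parentGraph_none, Set.ncard_image_of_injective _ (Option.some_injective _), this,
    Set.ncard_range_of_injective fun i j h => (Sigma.mk.inj_iff.1 h).1]

variable [Finite ι]

lemma ncard_neighborSet_spiderOfLegs_some_le (y : Σ i, Fin (m i + 1)) :
    ((spiderOfLegs m).neighborSet (some y)).ncard ≤ 2 := by
  have hchild : {x | legParent m x = some y}.ncard ≤ 1 := by
    refine (Set.ncard_le_one ..).2 ?_
    rintro ⟨i, k⟩ hx ⟨i', k'⟩ hx'
    obtain ⟨hx1, hx2⟩ := legParent_eq_some.1 hx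
    obtain ⟨hx1', hx2'⟩ := legParent_eq_some.1 hx'
    dsimp only at hx1 hx2 hx1' hx2'
    exact (sigma_fin_mk_eq_iff (f := fun i => m i + 1)).2 ⟨hx1.trans hx1'.symm, by omega⟩
  calc _ ≤ (insert (legParent m y) (some '' {x | legParent m x = some y})).ncard :=
        Set.ncard_le_ncard (neighborSet_parentGraph_some_subset y)
    _ ≤ {x | legParent m x = some y}.ncard + 1 := by
        grw [Set.ncard_insert_le, Set.ncard_image_le]
    _ ≤ 2 := by omega

lemma isSpider_spiderOfLegs {ι : Type} [Finite ι] {m : ι → ℕ} (h : 3 ≤ Nat.card ι) :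
    IsSpider (spiderOfLegs m) := by
  refine ⟨parentGraph_isTree (r := fun x => x.2) fun _ _ => legParent_rank, none, ?_, ?_⟩
  · change 3 ≤ _
    rwa [ncard_neighborSet_spiderOfLegs_none]
  · rintro (_ | y) hy
    · rfl
    · exact absurd (hy.trans (ncard_neighborSet_spiderOfLegs_some_le y)) (by norm_num)

end Legs

section LineGraph

variable {n : ℕ} {m : Fin n → ℕ}

/-- The edge of `spiderOfLegs m`, named by its lower endpoint, that a vertex of `genSpider n m`
stands for: body vertex `i` is the edge at the centre on leg `i`. -/
def legCode : Fin n ⊕ (Σ i, Fin (m i)) → Σ i, Fin (m i + 1)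
  | .inl i => ⟨i, 0⟩
  | .inr ⟨i, k⟩ => ⟨i, k.succ⟩

lemma legCode_bijective : (legCode (m := m)).Bijective := by
  constructor
  · rintro (i | ⟨i, k⟩) (j | ⟨j, l⟩) h <;>
      simp only [legCode, sigma_fin_mk_eq_iff (f := fun i => m i + 1), Fin.val_zero,
        Fin.val_succ] at h
    · rw [h.1]
    · omega
    · omega
    · obtain ⟨rfl, h⟩ := h
      rw [Fin.ext (by omega : k.val = l.val)]
  · rintro ⟨i, ⟨_ | k, hk⟩⟩
    · exact ⟨.inl i, rfl⟩
    · exact ⟨.inr ⟨i, ⟨k, by omega⟩⟩, rfl⟩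

lemma genSpider_adj_iff_legCode {x y : Fin n ⊕ (Σ i, Fin (m i))} :
    (genSpider n m).Adj x y ↔ x ≠ y ∧ (legParent m (legCode x) = legParent m (legCode y) ∨
      legParent m (legCode x) = some (legCode y) ∨
      legParent m (legCode y) = some (legCode x)) := by
  rw [genSpider, fromRel_adj]
  refine and_congr_right fun hxy => ?_
  rcases x with i | ⟨i, k⟩ <;> rcases y with j | ⟨j, l⟩ <;>
    simp only [spiderRel, legCode, legParent_mk_zero, legParent_mk_succ,
      Option.some.injEq, sigma_fin_mk_eq_iff (f := fun i => m i + 1), Fin.val_zero, Fin.val_succ,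
      Fin.val_castSucc, reduceCtorEq]
  · simp
  · grind
  · grind
  · have : ¬ (i = j ∧ (k : ℕ) = l) := by
      rintro ⟨rfl, h⟩
      exact hxy (by rw [Fin.ext h])
    grind

noncomputable def genSpiderIsoLineGraph (n : ℕ) (m : Fin n → ℕ) :
    genSpider n m ≃g (spiderOfLegs m).lineGraph where
  toEquiv := (Equiv.ofBijective _ legCode_bijective).trans
    (Equiv.ofBijective _ (parentEdge_bijective (r := fun x => x.2) fun _ _ => legParent_rank))
  map_rel_iff' {x y} := by
    simp only [Equiv.trans_apply, Equiv.ofBijective_apply]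
    rw [lineGraph_parentGraph_adj, legCode_bijective.1.ne_iff, genSpider_adj_iff_legCode]

end LineGraph

lemma Iso.isSpider_iff {V W : Type} {G : SimpleGraph V} {H : SimpleGraph W} (f : G ≃g H) :
    IsSpider G ↔ IsSpider H := by
  have hdeg (v : V) : (H.neighborSet (f v)).ncard = (G.neighborSet v).ncard := by
    rw [← Nat.card_coe_set_eq, ← Nat.card_coe_set_eq, Nat.card_congr (f.mapNeighborSet v)]
  rw [IsSpider, IsSpider, f.isTree_iff, f.toEquiv.existsUnique_congr_left]
  simp only [← hdeg, show ∀ w, f (f.toEquiv.symm w) = w from f.toEquiv.apply_symm_apply]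

namespace IsTree

variable {V : Type*} {S : SimpleGraph V} (hT : S.IsTree)

noncomputable def path (u v : V) : S.Walk u v := (hT.existsUnique_path u v).choose

lemma isPath_path (u v : V) : (hT.path u v).IsPath := (hT.existsUnique_path u v).choose_spec.1

lemma eq_path {u v : V} {p : S.Walk u v} (hp : p.IsPath) : p = hT.path u v :=
  (hT.existsUnique_path u v).unique hp (hT.isPath_path u v)

lemma length_path (u v : V) : (hT.path u v).length = S.dist u v := by
  obtain ⟨p, hp, hlen⟩ := hT.connected.exists_path_of_dist u v
  rw [← hT.eq_path hp, hlen]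

variable (c : V)

noncomputable def branch (v : V) : V := (hT.path v c).penultimate

variable {c}

lemma path_eq_cons {u v : V} (h : S.Adj v u) (hd : S.dist c u + 1 = S.dist c v) :
    hT.path v c = .cons h (hT.path u c) := by
  refine (hT.eq_path (Walk.isPath_of_length_eq_dist _ ?_)).symm
  rw [Walk.length_cons, length_path, dist_comm, hd, dist_comm]

lemma branch_eq_of_adj {u v : V} (h : S.Adj v u) (hd : S.dist c u + 1 = S.dist c v) (hu : u ≠ c) :
    hT.branch c v = hT.branch c u := by
  rw [branch, branch, hT.path_eq_cons h hd,
    Walk.penultimate_cons_of_not_nil _ _ (Walk.not_nil_of_ne hu)]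

lemma adj_branch {v : V} (hv : v ≠ c) : S.Adj (hT.branch c v) c :=
  Walk.adj_penultimate (Walk.not_nil_of_ne hv)

lemma branch_eq_self {v : V} (h : S.Adj v c) : hT.branch c v = v := by
  rw [branch, ← hT.eq_path (Path.singleton h).2]
  rfl

lemma exists_parent (hT : S.IsTree) {v : V} (hv : v ≠ c) :
    ∃ u, S.Adj v u ∧ S.dist c u + 1 = S.dist c v := by
  have hnil : ¬ (hT.path v c).Nil := Walk.not_nil_of_ne hv
  refine ⟨(hT.path v c).snd, Walk.adj_snd hnil, ?_⟩
  have hle : S.dist c (hT.path v c).snd ≤ (hT.path v c).tail.length :=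
    dist_comm (G := S) ▸ dist_le _
  have hlen : (hT.path v c).tail.length + 1 = S.dist c v := by
    rw [Walk.length_tail_add_one hnil, length_path, dist_comm]
  have := hT.dist_eq_dist_add_one_of_adj c (Walk.adj_snd hnil)
  omega

lemma exists_branch_eq_dist_eq (hT : S.IsTree) {v : V} (hv : v ≠ c) {k : ℕ} (hk : 1 ≤ k)
    (hkv : k ≤ S.dist c v) :
    ∃ u, u ≠ c ∧ hT.branch c u = hT.branch c v ∧ S.dist c u = k := by
  obtain ⟨d, hd⟩ : ∃ d, S.dist c v = k + d := ⟨_, (Nat.add_sub_cancel' hkv).symm⟩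
  induction d generalizing v with
  | zero => exact ⟨v, hv, rfl, hd⟩
  | succ d ih =>
    obtain ⟨u, hvu, hu⟩ := hT.exists_parent hv
    have huc : u ≠ c := by
      rintro rfl
      simp at hu
      omega
    obtain ⟨w, hwc, hw, hwk⟩ := ih huc (by omega) (by omega)
    exact ⟨w, hwc, hw.trans (hT.branch_eq_of_adj hvu hu huc).symm, hwk⟩

lemma nonempty_iso_parentGraph (hT : S.IsTree) {α : Type*} {p : α → Option α}
    {F : V → Option α} (hF : F.Bijective) (hFc : F c = none)
    (hFp : ∀ u v x, S.Adj v u → S.dist c u + 1 = S.dist c v → F v = some x → F u = p x) :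
    Nonempty (S ≃g parentGraph p) := by
  have hne {v : V} (hv : S.dist c v ≠ 0) : ∃ x, F v = some x := by
    refine Option.ne_none_iff_exists'.1 fun h => ?_
    rw [← hFc] at h
    simp [hF.1 h] at hv
  have hadj {u v : V} {x : α} (hvx : F v = some x) (hux : F u = p x) : S.Adj u v := by
    have hvc : v ≠ c := by
      rintro rfl
      simp [hFc] at hvx
    obtain ⟨w, hvw, hw⟩ := hT.exists_parent hvc
    rwa [hF.1 ((hFp w v x hvw hw hvx).trans hux.symm), adj_comm] at hvw
  refine ⟨⟨Equiv.ofBijective F hF, fun {u v} => ?_⟩⟩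
  simp only [Equiv.ofBijective_apply, parentGraph_adj, hF.1.ne_iff]
  constructor
  · rintro ⟨-, ⟨x, hvx, hux⟩ | ⟨x, hux, hvx⟩⟩
    · exact hadj hvx hux
    · exact (hadj hux hvx).symm
  · intro h
    refine ⟨h.ne, ?_⟩
    rcases hT.dist_eq_dist_add_one_of_adj c h with hd | hd
    · obtain ⟨x, hx⟩ := hne (v := u) (by omega)
      exact .inr ⟨x, hx, hFp v u x h hd.symm hx⟩
    · obtain ⟨x, hx⟩ := hne (v := v) (by omega)
      exact .inl ⟨x, hx, hFp u v x h.symm hd.symm hx⟩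

section Finite

variable [Finite V]

lemma eq_of_adj_of_dist_eq_add_one (hT : S.IsTree)
    (hc : ∀ v, 3 ≤ (S.neighborSet v).ncard → v = c) {w u u' : V}
    (hw : w ≠ c) (hu : S.Adj w u) (hu' : S.Adj w u')
    (hd : S.dist c u = S.dist c w + 1) (hd' : S.dist c u' = S.dist c w + 1) : u = u' := by
  by_contra hne
  obtain ⟨q, hwq, hq⟩ := hT.exists_parent hw
  have h3 : ({q, u, u'} : Set V).ncard = 3 :=
    Set.ncard_eq_three.2 ⟨q, u, u', by rintro rfl; omega, by rintro rfl; omega, hne, rfl⟩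
  refine hw (hc w (h3 ▸ Set.ncard_le_ncard ?_))
  rintro x (rfl | rfl | rfl) <;> assumption

lemma eq_of_branch_eq_of_dist_eq (hT : S.IsTree)
    (hc : ∀ v, 3 ≤ (S.neighborSet v).ncard → v = c) {u v : V}
    (hu : u ≠ c) (hv : v ≠ c) (hb : hT.branch c u = hT.branch c v)
    (hd : S.dist c u = S.dist c v) : u = v := by
  obtain ⟨k, hk⟩ : ∃ k, S.dist c u = k + 1 :=
    Nat.exists_eq_add_one.2 (hT.connected.pos_dist_of_ne (Ne.symm hu))
  induction k generalizing u v with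
  | zero =>
    rwa [hT.branch_eq_self (dist_eq_one_iff_adj.1 (by omega)).symm,
      hT.branch_eq_self (dist_eq_one_iff_adj.1 (by omega)).symm] at hb
  | succ k ih =>
    obtain ⟨pu, hupu, hpu⟩ := hT.exists_parent hu
    obtain ⟨pv, hvpv, hpv⟩ := hT.exists_parent hv
    have hpuc : pu ≠ c := by rintro rfl; simp at hpu; omega
    have hpvc : pv ≠ c := by rintro rfl; simp at hpv; omega
    have hp : pu = pv := ih hpuc hpvc (by rw [← hT.branch_eq_of_adj hupu hpu hpuc,
      ← hT.branch_eq_of_adj hvpv hpv hpvc, hb]) (by omega) (by omega)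
    subst hp
    exact hT.eq_of_adj_of_dist_eq_add_one hc hpuc hupu.symm hvpv.symm (by omega) (by omega)

variable (c) in
noncomputable def legLength (b : V) : ℕ := sSup (S.dist c '' {v | hT.branch c v = b})

lemma dist_le_legLength (v : V) : S.dist c v ≤ hT.legLength c (hT.branch c v) :=
  le_csSup (Set.toFinite _).bddAbove ⟨v, rfl, rfl⟩

lemma exists_dist_eq_legLength {b : V} (hb : S.Adj b c) :
    ∃ v, hT.branch c v = b ∧ S.dist c v = hT.legLength c b :=
  Nat.sSup_mem (s := S.dist c '' {v | hT.branch c v = b}) (.image _ ⟨b, hT.branch_eq_self hb⟩)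
    (Set.toFinite _).bddAbove

variable (c) {n : ℕ} (e : S.neighborSet c ≃ Fin n)

noncomputable def legLengths (i : Fin n) : ℕ := hT.legLength c (e.symm i) - 1

lemma dist_sub_one_lt_legLengths {v : V} (hv : v ≠ c) :
    S.dist c v - 1 < hT.legLengths c e (e ⟨hT.branch c v, (hT.adj_branch hv).symm⟩) + 1 := by
  have := hT.dist_le_legLength (c := c) v
  simp only [legLengths, Equiv.symm_apply_apply]
  omega

open scoped Classical in
noncomputable def legCoord (v : V) : Option (Σ i, Fin (hT.legLengths c e i + 1)) :=
  if hv : v = c then none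
  else some ⟨e ⟨hT.branch c v, (hT.adj_branch hv).symm⟩,
    ⟨S.dist c v - 1, hT.dist_sub_one_lt_legLengths c e hv⟩⟩

lemma legCoord_self : hT.legCoord c e c = none := dif_pos rfl

lemma legCoord_of_ne {v : V} (hv : v ≠ c) : hT.legCoord c e v =
    some ⟨e ⟨hT.branch c v, (hT.adj_branch hv).symm⟩,
      ⟨S.dist c v - 1, hT.dist_sub_one_lt_legLengths c e hv⟩⟩ :=
  dif_neg hv

variable {c}

lemma legCoord_parent {u v : V} {x : Σ i, Fin (hT.legLengths c e i + 1)} (h : S.Adj v u)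
    (hd : S.dist c u + 1 = S.dist c v) (hx : hT.legCoord c e v = some x) :
    hT.legCoord c e u = legParent _ x := by
  have hv : v ≠ c := by
    rintro rfl
    rw [legCoord_self] at hx
    cases hx
  rw [hT.legCoord_of_ne c e hv, Option.some.injEq] at hx
  subst hx
  by_cases hu : u = c
  · subst hu
    rw [legCoord_self, eq_comm, legParent_eq_none]
    simp only [dist_self] at hd
    simp [← hd]
  · have := hT.connected.pos_dist_of_ne (Ne.symm hu)
    rw [hT.legCoord_of_ne c e hu, eq_comm, legParent_eq_some]
    exact ⟨congrArg e (Subtype.ext (hT.branch_eq_of_adj h hd hu)), by dsimp only; omega⟩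

lemma legCoord_injective (hc : ∀ v, 3 ≤ (S.neighborSet v).ncard → v = c) :
    (hT.legCoord c e).Injective := by
  intro u v huv
  by_cases hu : u = c <;> by_cases hv : v = c
  · rw [hu, hv]
  · rw [hu, legCoord_self, hT.legCoord_of_ne c e hv] at huv
    cases huv
  · rw [hv, legCoord_self, hT.legCoord_of_ne c e hu] at huv
    cases huv
  · rw [hT.legCoord_of_ne c e hu, hT.legCoord_of_ne c e hv, Option.some.injEq,
      sigma_fin_mk_eq_iff (f := fun i => hT.legLengths c e i + 1)] at huv
    have := hT.connected.pos_dist_of_ne (Ne.symm hu)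
    have := hT.connected.pos_dist_of_ne (Ne.symm hv)
    exact hT.eq_of_branch_eq_of_dist_eq hc hu hv (congrArg Subtype.val (e.injective huv.1))
      (by dsimp only at huv; omega)

lemma legCoord_surjective : (hT.legCoord c e).Surjective := by
  rintro (_ | ⟨i, k⟩)
  · exact ⟨c, hT.legCoord_self c e⟩
  have hb : S.Adj (e.symm i : V) c := (e.symm i).2.symm
  have hk : (k : ℕ) + 1 ≤ hT.legLength c (e.symm i) := by
    have h1 := hT.dist_le_legLength (c := c) (e.symm i)
    rw [hT.branch_eq_self hb, dist_comm, dist_eq_one_iff_adj.2 hb] at h1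
    have h2 : (k : ℕ) < hT.legLength c (e.symm i) - 1 + 1 := k.2
    omega
  obtain ⟨v, hvb, hv⟩ := hT.exists_dist_eq_legLength hb
  have hvc : v ≠ c := by
    rintro rfl
    simp at hv
    omega
  obtain ⟨u, huc, hub, hu⟩ := hT.exists_branch_eq_dist_eq hvc (k := k + 1) (by omega) (by omega)
  refine ⟨u, ?_⟩
  rw [hT.legCoord_of_ne c e huc, Option.some.injEq,
    sigma_fin_mk_eq_iff (f := fun i => hT.legLengths c e i + 1)]
  refine ⟨?_, by simp [hu]⟩
  rw [← e.apply_symm_apply i]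
  exact congrArg e (Subtype.ext (hub.trans hvb))

end Finite

end IsTree

theorem IsSpider.exists_iso_spiderOfLegs {V : Type} [Finite V] {S : SimpleGraph V}
    (hS : IsSpider S) :
    ∃ (n : ℕ) (m : Fin n → ℕ), 3 ≤ n ∧ Nonempty (S ≃g spiderOfLegs m) := by
  obtain ⟨hT, c, hc3, hc⟩ := hS
  let e := Finite.equivFin (S.neighborSet c)
  refine ⟨_, hT.legLengths c e, by rwa [← Nat.card_coe_set_eq] at hc3,
    hT.nonempty_iso_parentGraph ⟨hT.legCoord_injective e hc, hT.legCoord_surjective e⟩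
      (hT.legCoord_self c e) fun _ _ _ => hT.legCoord_parent e⟩

end SimpleGraph

open SimpleGraph

theorem isGenSpider_iff_lineGraph_spider_general {V : Type} (G : SimpleGraph V) :
    (∃ n : ℕ, 3 ≤ n ∧ IsGenSpider G n) ↔
    ∃ (w : ℕ) (S : SimpleGraph (Fin w)), IsSpider S ∧ Nonempty (G ≃g S.lineGraph) := by
  constructor
  · rintro ⟨n, hn, m, ⟨f⟩⟩
    let T := spiderOfLegs m
    let g := T.overFinIso rfl
    exact ⟨_, T.overFin rfl, g.isSpider_iff.1 (isSpider_spiderOfLegs (by simpa using hn)),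
      ⟨f.trans ((genSpiderIsoLineGraph n m).trans g.lineGraph)⟩⟩
  · rintro ⟨w, S, hS, ⟨f⟩⟩
    obtain ⟨n, m, hn, ⟨g⟩⟩ := hS.exists_iso_spiderOfLegs
    exact ⟨n, hn, m, ⟨f.trans (g.lineGraph.trans (genSpiderIsoLineGraph n m).symm)⟩⟩

/-- A graph `G` is a generalized spider with body of size `n ≥ 3` if and only if `G` is
isomorphic to the line graph of some spider. -/
theorem isGenSpider_iff_lineGraph_spider {V : Type} [Fintype V] (G : SimpleGraph V) :
    (∃ n : ℕ, 3 ≤ n ∧ IsGenSpider G n) ↔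
    ∃ (w : ℕ) (S : SimpleGraph (Fin w)), IsSpider S ∧ Nonempty (G ≃g S.lineGraph) :=
  isGenSpider_iff_lineGraph_spider_general G
end

section
/- For a graph G on n vertices, the number of independent sets of size k in G equals the coefficient of the monomial symmetric function m_{(k,1^{n-k})} in the chromatic symmetric function X_G, divided by (n-k)!. In particular, the independence polynomial of G is determined by X_G. -/
/-!
A coloring whose color classes have sizes `(k, 1^{n-k})` is determined by its big class `S` and
a bijection from the `n - k` remaining vertices onto the singleton colors. Singleton classes never
violate properness, so the coloring is proper exactly when `S` is independent, and each
independent `k`-set contributes `(n-k)!` colorings.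
-/

open Classical in
/-- The chromatic symmetric function of a graph `G`, in `N` variables: the sum over all proper
colorings `κ : V → Fin N` of the monomials `∏ v, x_{κ v}`. -/
noncomputable def csf {V : Type} [Fintype V] (G : SimpleGraph V) (N : ℕ) :
    MvPolynomial (Fin N) ℚ :=
  ∑ κ ∈ Finset.univ.filter (fun κ : V → Fin N => ∀ u v, G.Adj u v → κ u ≠ κ v),
    ∏ v, MvPolynomial.X (κ v)

open Finset MvPolynomial

lemma sum_single_apply_eq_card_fiber {V C : Type*} [Fintype V] [DecidableEq C] (κ : V → C)
    (c : C) :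
    (∑ v, Finsupp.single (κ v) 1) c = #{v | κ v = c} := by
  rw [Finsupp.finsetSum_apply, card_filter]
  simp only [Finsupp.single_apply]

open Classical in
lemma coeff_csf {V : Type} [Fintype V] (G : SimpleGraph V) (N : ℕ) (d : Fin N → ℕ) :
    coeff (Finsupp.equivFunOnFinite.symm d) (csf G N) =
      Nat.card {κ : V → Fin N // (∀ u v, G.Adj u v → κ u ≠ κ v) ∧ ∀ c, #{v | κ v = c} = d c} := by
  simp only [csf, coeff_sum, X, ← monomial_sum_one, coeff_monomial, sum_boole, filter_filter,
    Finsupp.ext_iff, sum_single_apply_eq_card_fiber, Finsupp.equivFunOnFinite_symm_apply_apply,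
    Nat.card_eq_fintype_card, Fintype.card_subtype]

section HookColorings

variable {V C : Type*} {κ : V → C} {c₀ : C}

lemma proper_iff_of_injOn (G : SimpleGraph V) (h : Set.InjOn κ {v | κ v ≠ c₀}) :
    (∀ u v, G.Adj u v → κ u ≠ κ v) ↔ ∀ u, κ u = c₀ → ∀ v, κ v = c₀ → ¬G.Adj u v := by
  refine ⟨fun h_proper u hu v hv hadj => h_proper u v hadj (hu.trans hv.symm), ?_⟩
  intro h_indep u v hadj huv
  by_cases hu : κ u = c₀
  · exact h_indep u hu v (huv ▸ hu) hadj
  · exact G.ne_of_adj hadj (h hu (show κ v ≠ c₀ from huv ▸ hu) huv)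

variable [Fintype V] [DecidableEq C] {T : Finset C} {k : ℕ}

lemma card_fiber_eq_ite_iff (hc₀ : c₀ ∉ T) :
    (∀ c, #{v | κ v = c} = if c = c₀ then k else if c ∈ T then 1 else 0) ↔
      #{v | κ v = c₀} = k ∧ Set.BijOn κ {v | κ v ≠ c₀} T := by
  have hT_ne {c : C} (hc : c ∈ T) : c ≠ c₀ := fun h => hc₀ (h ▸ hc)
  constructor
  · intro h
    have h_one {c : C} (hc : c ∈ T) : #{v | κ v = c} = 1 := by simp [h c, hT_ne hc, hc]
    have h_maps : Set.MapsTo κ {v | κ v ≠ c₀} T := fun v (hv : κ v ≠ c₀) => by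
      by_contra (hvT : κ v ∉ T)
      have h_zero := h (κ v)
      rw [if_neg hv, if_neg hvT, card_eq_zero, filter_eq_empty_iff] at h_zero
      exact h_zero (mem_univ v) rfl
    refine ⟨by simpa using h c₀, h_maps, fun u hu v _ huv => ?_, fun c hc => ?_⟩
    · exact card_le_one.1 (h_one (h_maps hu)).le u (by simp) v (by simp [huv])
    · obtain ⟨v, hv⟩ := card_pos.1 (h_one hc ▸ Nat.one_pos)
      have hv : κ v = c := by simpa using hv
      exact ⟨v, by simp [hv, hT_ne hc], hv⟩
  · rintro ⟨hk, h_maps, h_inj, h_surj⟩ c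
    by_cases hc : c = c₀
    · simp [hc, hk]
    by_cases hcT : c ∈ T
    · obtain ⟨v, hv, rfl⟩ := h_surj hcT
      rw [if_neg hc, if_pos hcT, card_eq_one]
      refine ⟨v, eq_singleton_iff_unique_mem.2 ⟨by simp, fun w hw => ?_⟩⟩
      have hw : κ w = κ v := by simpa using hw
      exact h_inj (by simpa [hw] using hv) hv hw
    · rw [if_neg hc, if_neg hcT, card_eq_zero, filter_eq_empty_iff]
      rintro v - rfl
      exact hcT (h_maps hc)

variable [DecidableEq V]

noncomputable def fiberBijOnEquiv (S : Finset V) (hc₀ : c₀ ∉ T) :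
    {κ : V → C // ({v | κ v = c₀} : Finset V) = S ∧ Set.BijOn κ ↑Sᶜ ↑T} ≃ (↥Sᶜ ≃ ↥T) where
  toFun κ := κ.2.2.equiv
  invFun e := by
    refine ⟨fun v => if h : v ∈ S then c₀ else e ⟨v, mem_compl.2 h⟩, ?_, ?_, ?_, ?_⟩
    · ext v
      by_cases hv : v ∈ S
      · simp [hv]
      · have h_ne : (e ⟨v, mem_compl.2 hv⟩ : C) ≠ c₀ := fun h => hc₀ (h ▸ (e _).2)
        simp [hv, h_ne]
    · intro v hv
      simp [mem_compl.1 hv]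
    · intro u hu v hv huv
      simpa [mem_compl.1 hu, mem_compl.1 hv, Subtype.val_inj] using huv
    · intro c hc
      obtain ⟨⟨v, hv⟩, hvc⟩ := e.surjective ⟨c, hc⟩
      exact ⟨v, hv, by simp [mem_compl.1 hv, hvc]⟩
  left_inv κ := by
    obtain ⟨κ, hS, -⟩ := κ
    ext v
    by_cases hv : v ∈ S
    · simp only [dif_pos hv]
      exact ((mem_filter.1 (hS ▸ hv)).2).symm
    · simp only [dif_neg hv]
      rfl
  right_inv e := by
    ext v
    simp [Set.BijOn.equiv, mem_compl.1 v.2]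

variable [Fintype C]

theorem card_colorings_fiber_eq_factorial (G : SimpleGraph V) [DecidableRel G.Adj] (hc₀ : c₀ ∉ T)
    (hV : Fintype.card V = k + #T) {S : Finset V} (hS : #S = k ∧ ∀ u ∈ S, ∀ v ∈ S, ¬G.Adj u v) :
    #{κ : V → C | ((∀ u v, G.Adj u v → κ u ≠ κ v) ∧
        ∀ c, #{v | κ v = c} = if c = c₀ then k else if c ∈ T then 1 else 0) ∧
      ({v | κ v = c₀} : Finset V) = S} = (#T).factorial := by
  have h_fiber (κ : V → C) :
      (((∀ u v, G.Adj u v → κ u ≠ κ v) ∧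
        ∀ c, #{v | κ v = c} = if c = c₀ then k else if c ∈ T then 1 else 0) ∧
      ({v | κ v = c₀} : Finset V) = S) ↔
      ({v | κ v = c₀} : Finset V) = S ∧ Set.BijOn κ ↑Sᶜ ↑T := by
    rw [card_fiber_eq_ite_iff hc₀]
    constructor
    · rintro ⟨⟨-, -, h_bij⟩, rfl⟩
      refine ⟨rfl, ?_⟩
      simpa using h_bij
    · rintro ⟨rfl, h_bij⟩
      have h_bij : Set.BijOn κ {v | κ v ≠ c₀} T := by simpa using h_bij
      refine ⟨⟨?_, hS.1, h_bij⟩, rfl⟩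
      rw [proper_iff_of_injOn G h_bij.injOn]
      simpa using hS.2
  have h_card : Fintype.card (↥Sᶜ) = #T := by
    rw [Fintype.card_coe, card_compl]
    omega
  rw [filter_congr fun κ _ => h_fiber κ, ← Fintype.card_subtype,
    Fintype.card_congr (fiberBijOnEquiv S hc₀),
    Fintype.card_equiv (Fintype.equivOfCardEq (h_card.trans (Fintype.card_coe T).symm)), h_card]

theorem card_proper_colorings_hook (G : SimpleGraph V) (hc₀ : c₀ ∉ T)
    (hV : Fintype.card V = k + #T) :
    Nat.card {κ : V → C // (∀ u v, G.Adj u v → κ u ≠ κ v) ∧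
        ∀ c, #{v | κ v = c} = if c = c₀ then k else if c ∈ T then 1 else 0} =
      (#T).factorial * Nat.card {s : Finset V // #s = k ∧ ∀ u ∈ s, ∀ v ∈ s, ¬G.Adj u v} := by
  classical
  simp only [Nat.card_eq_fintype_card, Fintype.card_subtype]
  rw [card_eq_sum_card_fiberwise (f := fun κ => ({v | κ v = c₀} : Finset V))
      (t := {s | #s = k ∧ ∀ u ∈ s, ∀ v ∈ s, ¬G.Adj u v}) ?_, mul_comm,
    sum_const_nat fun S hS => by
      rw [filter_filter]
      exact card_colorings_fiber_eq_factorial G hc₀ hV (mem_filter.1 hS).2]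
  intro κ hκ
  obtain ⟨h_proper, h_sizes⟩ := (mem_filter.1 hκ).2
  refine mem_filter.2 ⟨mem_univ _, by simpa using h_sizes c₀, ?_⟩
  simp only [mem_filter, mem_univ, true_and]
  exact fun u hu v hv hadj => h_proper u v hadj (hu.trans hv.symm)

end HookColorings

lemma coeff_csf_hook {n k : ℕ} (hk : 0 < k) (hkn : k ≤ n) (G : SimpleGraph (Fin n)) :
    coeff (Finsupp.equivFunOnFinite.symm fun i : Fin n =>
        if (i : ℕ) = 0 then k else if (i : ℕ) ≤ n - k then 1 else 0) (csf G n) =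
      ((n - k).factorial *
        Nat.card {s : Finset (Fin n) // s.card = k ∧ ∀ u ∈ s, ∀ v ∈ s, ¬ G.Adj u v} : ℕ) := by
  let c₀ : Fin n := ⟨0, by omega⟩
  let T : Finset (Fin n) := (Icc 1 (n - k)).attachFin fun m hm => by simp at hm; omega
  have hT : #T = n - k := by simp [T]
  have h_sizes (i : Fin n) : (if (i : ℕ) = 0 then k else if (i : ℕ) ≤ n - k then 1 else 0) =
      if i = c₀ then k else if i ∈ T then 1 else 0 := by
    simp only [c₀, T, Fin.ext_iff, mem_attachFin, mem_Icc]
    split_ifs <;> omega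
  rw [coeff_csf]
  simp only [h_sizes]
  rw [card_proper_colorings_hook G (by simp [c₀, T]) (by simp [hT]; omega), hT]

lemma indep_of_card_le_one {V : Type*} (G : SimpleGraph V) {s : Finset V} (hs : #s ≤ 1) :
    ∀ u ∈ s, ∀ v ∈ s, ¬G.Adj u v :=
  fun u hu v hv hadj => G.ne_of_adj hadj (card_le_one.1 hs u hu v hv)

/-- For a graph `G` on `n` vertices and `2 ≤ k ≤ n`, the coefficient of the monomial symmetric
function `m_{(k,1^{n-k})}` in the chromatic symmetric function `X_G` (read off as the coefficient
of the monomial `x_0^k x_1 ⋯ x_{n-k}`) equals `(n-k)!` times the number of independent sets of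
size `k` in `G`; in particular, the independence polynomial of `G` is determined by `X_G`. -/
theorem indep_sets_from_csf (n k : ℕ) (hk : 2 ≤ k) (hkn : k ≤ n) (G : SimpleGraph (Fin n)) :
    (MvPolynomial.coeff
        (Finsupp.equivFunOnFinite.symm fun i : Fin n =>
          if (i : ℕ) = 0 then k else if (i : ℕ) ≤ n - k then 1 else 0)
        (csf G n)
      = ((Nat.factorial (n - k) *
          Nat.card {s : Finset (Fin n) // s.card = k ∧ ∀ u ∈ s, ∀ v ∈ s, ¬ G.Adj u v} : ℕ) : ℚ))
    ∧ ∀ G' : SimpleGraph (Fin n), (∀ N : ℕ, csf G N = csf G' N) →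
        ∀ j : ℕ,
          Nat.card {s : Finset (Fin n) // s.card = j ∧ ∀ u ∈ s, ∀ v ∈ s, ¬ G.Adj u v}
            = Nat.card {s : Finset (Fin n) // s.card = j ∧ ∀ u ∈ s, ∀ v ∈ s, ¬ G'.Adj u v} := by
  refine ⟨coeff_csf_hook (by omega) hkn G, fun G' h_csf j => ?_⟩
  by_cases hj : 0 < j ∧ j ≤ n
  · have h := coeff_csf_hook hj.1 hj.2 G
    rw [h_csf n, coeff_csf_hook hj.1 hj.2 G'] at h
    exact (Nat.eq_of_mul_eq_mul_left (Nat.factorial_pos _) (by exact_mod_cast h)).symm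
  · -- for `j = 0` or `j > n`, every `j`-set is independent, whatever the graph
    have h_indep (H : SimpleGraph (Fin n)) (s : Finset (Fin n)) (hs : s.card = j) :
        ∀ u ∈ s, ∀ v ∈ s, ¬H.Adj u v := by
      have := card_le_univ s
      exact indep_of_card_le_one H (by simp at this; omega)
    exact Nat.card_congr <| Equiv.subtypeEquivRight fun s =>
      ⟨fun h => ⟨h.1, h_indep G' s h.1⟩, fun h => ⟨h.1, h_indep G s h.1⟩⟩
end

section
/- Let P(m) be the natural unit interval order on [n] induced by m = (2, m_2, m_3, n, ..., n), with 2 incomparable to 3 and 3 incomparable to 4. Then every P(m)-tableau has shape among (1^n), (2,1^{n-2}), (2^2,1^{n-4}), (2^3,1^{n-6}), (3,1^{n-3}), (3,2,1^{n-5}). -/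
/-- The order relation of the natural unit interval order `P(m)` on `{1, …, n}`:
`i <_P j` iff `m i < j`. -/
def ltP (m : ℕ → ℕ) (i j : ℕ) : Prop := m i < j

/-- `u` and `v` are incomparable in `P(m)` (an edge of the incomparability graph). -/
def Incomp (m : ℕ → ℕ) (u v : ℕ) : Prop := u ≠ v ∧ ¬ ltP m u v ∧ ¬ ltP m v u

/-- `m` encodes a natural unit interval order `P(m)` on `{1, …, n}` induced by the sequence
`(2, m 2, m 3, n, …, n)`: `m 1 = 2`; `i ≤ m i ≤ n` for `1 ≤ i ≤ n`; `m` is nondecreasing on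
`{1, …, n}`; and `m i = n` for `4 ≤ i ≤ n`. -/
def SeqHyp (n : ℕ) (m : ℕ → ℕ) : Prop :=
  m 1 = 2 ∧
  (∀ i, 1 ≤ i → i ≤ n → i ≤ m i ∧ m i ≤ n) ∧
  (∀ i j, 1 ≤ i → i ≤ j → j ≤ n → m i ≤ m j) ∧
  (∀ i, 4 ≤ i → i ≤ n → m i = n)

/-- A `P(m)`-tableau of shape `sh` (a partition of `n`, given as a nonincreasing list of row
lengths): a filling of the cells `(i, j)` with `j < sh[i]` by the elements `1, …, n`, each
appearing exactly once, with rows strictly increasing in `<_P` and entries in consecutive rows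
of a column pairwise non-decreasing (`¬ b <_P a` whenever `a` is immediately above `b`).
Cells outside the shape carry the junk value `0`. -/
structure PTab (n : ℕ) (m : ℕ → ℕ) (sh : List ℕ) where
  entry : ℕ → ℕ → ℕ
  zero_outside : ∀ i j, sh.getD i 0 ≤ j → entry i j = 0
  mem_inside : ∀ i j, j < sh.getD i 0 → entry i j ∈ Finset.Icc 1 n
  inj : ∀ i j i' j', j < sh.getD i 0 → j' < sh.getD i' 0 →
    entry i j = entry i' j' → i = i' ∧ j = j'
  surj : ∀ v ∈ Finset.Icc 1 n, ∃ i j, j < sh.getD i 0 ∧ entry i j = v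
  rows : ∀ i j j', j < j' → j' < sh.getD i 0 → ltP m (entry i j) (entry i j')
  cols : ∀ i j, j < sh.getD (i + 1) 0 → ¬ ltP m (entry (i + 1) j) (entry i j)

/-- The number of `G`-inversions of a `P(m)`-tableau: pairs of cells carrying incomparable
values `u < v` with `u` in a strictly higher row than `v`. -/
noncomputable def invG {n : ℕ} {m : ℕ → ℕ} {sh : List ℕ} (T : PTab n m sh) : ℕ :=
  Nat.card {c : (ℕ × ℕ) × (ℕ × ℕ) //
    c.1.2 < sh.getD c.1.1 0 ∧ c.2.2 < sh.getD c.2.1 0 ∧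
    c.1.1 < c.2.1 ∧
    T.entry c.1.1 c.1.2 < T.entry c.2.1 c.2.2 ∧
    Incomp m (T.entry c.1.1 c.1.2) (T.entry c.2.1 c.2.2)}

/-!
An entry that is not last in its row lies below its right neighbour in `P(m)`, so it is not
maximal, i.e. it is one of `1, 2, 3`. These cells carry distinct entries, so a `P(m)`-tableau
has at most three of them, i.e. `∑ (λᵢ - 1) ≤ 3`. A row of length four would contain a chain
`1 <_P 2 <_P 3`, impossible as `m 1 = 2`. The partitions with `λ₁ ≤ 3` and `∑ (λᵢ - 1) ≤ 3`
are exactly the six listed ones.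
-/

lemma List.eq_replicate_sum_one {l : List ℕ} (hpos : ∀ x ∈ l, 0 < x) (hle : ∀ x ∈ l, x ≤ 1) :
    l = List.replicate l.sum 1 := by
  have h : l = List.replicate l.length 1 :=
    List.eq_replicate_iff.2 ⟨rfl, fun x hx => by have := hpos x hx; have := hle x hx; omega⟩
  conv_rhs => rw [h]
  simpa using h

lemma List.sum_range_length_getD {α M : Type*} [AddCommMonoid M] (l : List α) (d : α)
    (f : α → M) : ∑ i ∈ Finset.range l.length, f (l.getD i d) = (l.map f).sum := by
  induction l with
  | nil => simp
  | cons a l ih =>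
    simp only [List.length_cons, Finset.sum_range_succ', List.getD_cons_succ, List.getD_cons_zero,
      ih, List.map_cons, List.sum_cons, add_comm]

def ptabShapes (n : ℕ) : List (List ℕ) :=
  [List.replicate n 1,
   2 :: List.replicate (n - 2) 1,
   2 :: 2 :: List.replicate (n - 4) 1,
   2 :: 2 :: 2 :: List.replicate (n - 6) 1,
   3 :: List.replicate (n - 3) 1,
   3 :: 2 :: List.replicate (n - 5) 1]

theorem mem_ptabShapes {sh : List ℕ} (hsorted : sh.Pairwise (· ≥ ·)) (hpos : ∀ x ∈ sh, 0 < x)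
    (hfirst : sh.getD 0 0 ≤ 3) (hexcess : (sh.map (· - 1)).sum ≤ 3) :
    sh ∈ ptabShapes sh.sum := by
  rcases sh with _ | ⟨a, _ | ⟨b, _ | ⟨c, l⟩⟩⟩
  · simp [ptabShapes]
  all_goals simp only [List.mem_cons, forall_eq_or_imp, List.getD_cons_zero, List.pairwise_cons,
    List.map_cons, List.sum_cons] at hpos hfirst hsorted hexcess
  · obtain ⟨ha, -⟩ := hpos
    interval_cases a <;> simp [ptabShapes]
  · obtain ⟨⟨hba, -⟩, -⟩ := hsorted
    obtain ⟨ha, hb, -⟩ := hpos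
    interval_cases a <;> interval_cases b <;> try omega
    all_goals simp [ptabShapes]
  · obtain ⟨⟨hba, hca, -⟩, ⟨hcb, -⟩, hlc, -⟩ := hsorted
    obtain ⟨ha, hb, hc, hl⟩ := hpos
    -- the first three rows already use up the excess unless `c = 1`
    rw [List.eq_replicate_sum_one hl fun x hx => by
      have := List.le_sum_of_mem (List.mem_map_of_mem (f := (· - 1)) hx)
      have := hlc x hx
      omega]
    generalize l.sum = k
    interval_cases a <;> interval_cases b <;> interval_cases c <;> try omega
    all_goals simp +arith [ptabShapes, List.replicate_succ]

def nonLastCells (sh : List ℕ) : Finset ((_ : ℕ) × ℕ) :=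
  (Finset.range sh.length).sigma fun i => Finset.range (sh.getD i 0 - 1)

lemma card_nonLastCells (sh : List ℕ) : (nonLastCells sh).card = (sh.map (· - 1)).sum := by
  simp only [nonLastCells, Finset.card_sigma, Finset.card_range]
  exact List.sum_range_length_getD sh 0 (· - 1)

namespace PTab

variable {n : ℕ} {m : ℕ → ℕ} {sh : List ℕ}

lemma one_le_entry (T : PTab n m sh) {i j : ℕ} (hj : j < sh.getD i 0) : 1 ≤ T.entry i j :=
  (Finset.mem_Icc.1 (T.mem_inside i j hj)).1

lemma entry_le (T : PTab n m sh) {i j : ℕ} (hj : j < sh.getD i 0) : T.entry i j ≤ n :=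
  (Finset.mem_Icc.1 (T.mem_inside i j hj)).2

lemma entry_le_three_of_succ_lt (T : PTab n m sh) (htop : ∀ i, 4 ≤ i → i ≤ n → m i = n) {i j : ℕ}
    (hj : j + 1 < sh.getD i 0) : T.entry i j ≤ 3 := by
  have hrow : m (T.entry i j) < T.entry i (j + 1) := T.rows i j (j + 1) (lt_add_one j) hj
  have hle : T.entry i (j + 1) ≤ n := T.entry_le hj
  by_contra! h
  rw [htop _ h (T.entry_le (by omega))] at hrow
  omega

lemma excess_le_three (T : PTab n m sh) (htop : ∀ i, 4 ≤ i → i ≤ n → m i = n) :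
    (sh.map (· - 1)).sum ≤ 3 := by
  rw [← card_nonLastCells]
  calc (nonLastCells sh).card ≤ (Finset.Icc 1 3).card := by
        refine Finset.card_le_card_of_injOn (fun c => T.entry c.1 c.2) ?_ ?_
        · rintro ⟨i, j⟩ hc
          dsimp only
          simp only [Finset.mem_coe, nonLastCells, Finset.mem_sigma, Finset.mem_range] at hc
          exact Finset.mem_Icc.2
            ⟨T.one_le_entry (by omega), T.entry_le_three_of_succ_lt htop (by omega)⟩
        · rintro ⟨i, j⟩ hc ⟨i', j'⟩ hc' h
          simp only [Finset.mem_coe, nonLastCells, Finset.mem_sigma, Finset.mem_range] at hc hc'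
          obtain ⟨rfl, rfl⟩ := T.inj i j i' j' (by omega) (by omega) h
          rfl
    _ = 3 := by simp

lemma row_length_le_three (T : PTab n m sh) (hm1 : m 1 = 2) (hle : ∀ i, 1 ≤ i → i ≤ n → i ≤ m i)
    (htop : ∀ i, 4 ≤ i → i ≤ n → m i = n) (i : ℕ) : sh.getD i 0 ≤ 3 := by
  by_contra! h
  have h01 : m (T.entry i 0) < T.entry i 1 := T.rows i 0 1 one_pos (by omega)
  have h12 : m (T.entry i 1) < T.entry i 2 := T.rows i 1 2 one_lt_two (by omega)
  have hinc : ∀ j < 2, 1 ≤ T.entry i j ∧ T.entry i j ≤ m (T.entry i j) := fun j hj =>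
    ⟨T.one_le_entry (by omega), hle _ (T.one_le_entry (by omega)) (T.entry_le (by omega))⟩
  have h2 : T.entry i 2 ≤ 3 := T.entry_le_three_of_succ_lt htop (by omega)
  have := hinc 0 two_pos
  have := hinc 1 one_lt_two
  -- `u <_P v` forces `u < v`, so the row starts `1, 2`; but `1 ⊀_P 2`
  have he0 : T.entry i 0 = 1 := by omega
  have he1 : T.entry i 1 = 2 := by omega
  rw [he0, he1, hm1] at h01
  exact lt_irrefl 2 h01

end PTab

theorem ptab_shapes_general (n : ℕ) (m : ℕ → ℕ) (hm : SeqHyp n m)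
    (sh : List ℕ) (hsorted : sh.Pairwise (· ≥ ·)) (hpos : ∀ x ∈ sh, 0 < x)
    (hsum : sh.sum = n) (T : PTab n m sh) :
    sh ∈ [List.replicate n 1,
          2 :: List.replicate (n - 2) 1,
          2 :: 2 :: List.replicate (n - 4) 1,
          2 :: 2 :: 2 :: List.replicate (n - 6) 1,
          3 :: List.replicate (n - 3) 1,
          3 :: 2 :: List.replicate (n - 5) 1] := by
  obtain ⟨hm1, hbound, -, htop⟩ := hm
  have hfirst := T.row_length_le_three hm1 (fun i h1 h2 => (hbound i h1 h2).1) htop 0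
  have hexcess := T.excess_le_three htop
  subst hsum
  exact mem_ptabShapes hsorted hpos hfirst hexcess

/-- For the natural unit interval order `P(m)` on `{1,…,n}` induced by `(2, m₂, m₃, n, …, n)`,
with `2` incomparable to `3` and `3` incomparable to `4`, every `P(m)`-tableau has shape
among `(1^n)`, `(2,1^{n-2})`, `(2²,1^{n-4})`, `(2³,1^{n-6})`, `(3,1^{n-3})`,
`(3,2,1^{n-5})`. -/
theorem ptab_shapes (n : ℕ) (m : ℕ → ℕ) (hn : 4 ≤ n) (hm : SeqHyp n m)
    (h23 : 3 ≤ m 2) (h34 : 4 ≤ m 3)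
    (sh : List ℕ) (hsorted : sh.Pairwise (· ≥ ·)) (hpos : ∀ x ∈ sh, 0 < x)
    (hsum : sh.sum = n) (T : PTab n m sh) :
    sh ∈ [List.replicate n 1,
          2 :: List.replicate (n - 2) 1,
          2 :: 2 :: List.replicate (n - 4) 1,
          2 :: 2 :: 2 :: List.replicate (n - 6) 1,
          3 :: List.replicate (n - 3) 1,
          3 :: 2 :: List.replicate (n - 5) 1] :=
  ptab_shapes_general n m hm sh hsorted hpos hsum T
end

section
/- Let P(m) be the natural unit interval order on [n] induced by m = (2, m_2, m_3, n, ..., n) with 2 incomparable to 3 and 3 incomparable to 4, and let G be its incomparability graph. Then there is an injection ψ from P(m)-tableaux of shape (3,2,1^{n-5}) to P(m)-tableaux of shape (2,2,2,1^{n-6}) such that inv_G(ψ(T)) = inv_G(T) + 1 for all T. -/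
/-!
A tableau `T` of shape `(3,2,1^{n-5})` reads `1 3 W / 2 E / F / tail`, with `W > m₃`, `E > m₂`,
and `W, E, F ≥ 4`, hence pairwise incomparable. `ψ T` has first column `1, 2, 3`, second column
a rearrangement `x` of `(W, E, F)` with `x₂ > m₂` and `x₃ > m₃`, and the same tail. Values outside
`{1, 2, 3, W, E, F}` keep their rows, all below row `2`, so only inversions inside this six-element
set change: `T` has `1 + [F ≤ m₂] + [E ≤ m₃] + [F ≤ m₃] + asc (W, E, F)` of them and `ψ T` has
`2 + asc x`, where `asc` counts the increasing pairs of a triple. The rearrangement is chosen, by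
cases on how `E` and `F` compare with `m₂` and `m₃`, so that
`asc x = asc (W, E, F) + [F ≤ m₂] + [E ≤ m₃] + [F ≤ m₃]`; it is injective in `(W, E, F)`, which
makes `ψ` injective.
-/

open Finset

theorem incomp_iff_le_of_lt {m : ℕ → ℕ} {u v : ℕ} (huv : u < v) (hv : v ≤ m v) :
    Incomp m u v ↔ v ≤ m u := by
  unfold Incomp ltP
  omega

namespace SeqHyp

variable {n : ℕ} {m : ℕ → ℕ}

theorem self_le (hm : SeqHyp n m) {v : ℕ} (h1 : 1 ≤ v) (hv : v ≤ n) : v ≤ m v :=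
  (hm.2.1 v h1 hv).1

theorem apply_eq (hm : SeqHyp n m) {v : ℕ} (h4 : 4 ≤ v) (hv : v ≤ n) : m v = n :=
  hm.2.2.2 v h4 hv

theorem apply_mono (hm : SeqHyp n m) {i j : ℕ} (hi : 1 ≤ i) (hij : i ≤ j) (hj : j ≤ n) :
    m i ≤ m j :=
  hm.2.2.1 i j hi hij hj

theorem apply_two_le_apply_three (hm : SeqHyp n m) (hn : 3 ≤ n) : m 2 ≤ m 3 :=
  hm.apply_mono (by omega) (by omega) hn

theorem le_three_of_ltP (hm : SeqHyp n m) {u v : ℕ} (hu : u ≤ n) (hv : v ≤ n)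
    (h : ltP m u v) : u ≤ 3 := by
  by_contra! h4
  have := hm.apply_eq h4 hu
  unfold ltP at h
  omega

end SeqHyp

/-- Pairs `u < v` of incomparable values of `D` with `u` in a higher row than `v`, where `r` gives
the row of each value; for `u < v ≤ m v`, `v ≤ m u` is incomparability (`incomp_iff_le_of_lt`). -/
def inversions (m r : ℕ → ℕ) (D : Finset ℕ) : Finset (ℕ × ℕ) :=
  (D ×ˢ D).filter fun p => p.1 < p.2 ∧ p.2 ≤ m p.1 ∧ r p.1 < r p.2

theorem card_inversions_eq_sum (m r : ℕ → ℕ) (D : Finset ℕ) :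
    #(inversions m r D) = ∑ u ∈ D, ∑ v ∈ D, if u < v ∧ v ≤ m u ∧ r u < r v then 1 else 0 := by
  rw [inversions, card_filter, sum_product]

theorem card_inversions_add_card_inversions {m r r' : ℕ → ℕ} {S D : Finset ℕ} {k : ℕ}
    (hSD : S ⊆ D) (hS : ∀ s ∈ S, r s < k ∧ r' s < k)
    (hD : ∀ v ∈ D, v ∉ S → r' v = r v ∧ k ≤ r v) :
    #(inversions m r' D) + #(inversions m r S) = #(inversions m r D) + #(inversions m r' S) := by
  have hres : ∀ r₀ : ℕ → ℕ, inversions m r₀ D ∩ S ×ˢ S = inversions m r₀ S := by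
    intro r₀
    ext ⟨u, v⟩
    simp only [inversions, mem_inter, mem_filter, mem_product]
    constructor
    · rintro ⟨⟨-, h⟩, huv⟩
      exact ⟨huv, h⟩
    · rintro ⟨huv, h⟩
      exact ⟨⟨⟨hSD huv.1, hSD huv.2⟩, h⟩, huv⟩
  have hrow : ∀ u ∈ D, ∀ v ∈ D, ¬(u ∈ S ∧ v ∈ S) → (r' u < r' v ↔ r u < r v) := by
    intro u hu v hv huv
    by_cases hu' : u ∈ S
    · have := hS u hu'
      have := hD v hv fun hv' => huv ⟨hu', hv'⟩
      omega
    · have := hD u hu hu'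
      by_cases hv' : v ∈ S
      · have := hS v hv'
        omega
      · have := hD v hv hv'
        omega
  have hout : inversions m r' D \ S ×ˢ S = inversions m r D \ S ×ˢ S := by
    ext ⟨u, v⟩
    simp only [inversions, mem_sdiff, mem_filter, mem_product]
    constructor <;> rintro ⟨⟨⟨hu, hv⟩, hlt, hle, h⟩, huv⟩
    · exact ⟨⟨⟨hu, hv⟩, hlt, hle, (hrow u hu v hv huv).1 h⟩, huv⟩
    · exact ⟨⟨⟨hu, hv⟩, hlt, hle, (hrow u hu v hv huv).2 h⟩, huv⟩
  have h := card_inter_add_card_sdiff (inversions m r' D) (S ×ˢ S)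
  have h' := card_inter_add_card_sdiff (inversions m r D) (S ×ˢ S)
  rw [hres, hout] at h
  rw [hres] at h'
  omega

def ascents (x : ℕ × ℕ × ℕ) : ℕ :=
  (if x.1 < x.2.1 then 1 else 0) + (if x.1 < x.2.2 then 1 else 0) +
    (if x.2.1 < x.2.2 then 1 else 0)

theorem card_inversions_six {n : ℕ} {m r : ℕ → ℕ} {a b c k : ℕ} (hm1 : m 1 = 2) (h23 : 3 ≤ m 2)
    (ha : 4 ≤ a) (hb : 4 ≤ b) (hc : 4 ≤ c) (hbn : b ≤ n) (hcn : c ≤ n)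
    (hma : m a = n) (hmb : m b = n) (hab : a ≠ b) (hac : a ≠ c) (hbc : b ≠ c)
    (hr1 : r 1 = 0) (hr2 : r 2 = 1) (hr3 : r 3 = k) (hra : r a = 0) (hrb : r b = 1)
    (hrc : r c = 2) :
    #(inversions m r {1, 2, 3, a, b, c}) =
      1 + (if 1 < k then 1 else 0) + (if c ≤ m 2 then 1 else 0)
        + (if b ≤ m 3 ∧ k < 1 then 1 else 0) + (if c ≤ m 3 ∧ k < 2 then 1 else 0)
        + ascents (a, b, c) := by
  have h1 : (1 : ℕ) ∉ ({2, 3, a, b, c} : Finset ℕ) := by simp; omega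
  have h2 : (2 : ℕ) ∉ ({3, a, b, c} : Finset ℕ) := by simp; omega
  have h3 : (3 : ℕ) ∉ ({a, b, c} : Finset ℕ) := by simp; omega
  have h4 : a ∉ ({b, c} : Finset ℕ) := by simp; omega
  have h5 : b ∉ ({c} : Finset ℕ) := by simp; omega
  rw [card_inversions_eq_sum, ascents]
  simp only [sum_insert h1, sum_insert h2, sum_insert h3, sum_insert h4, sum_insert h5,
    sum_singleton, hr1, hr2, hr3, hra, hrb, hrc, hm1, hma, hmb]
  simp (disch := omega) only [if_neg, lt_irrefl, and_false, false_and, and_true, true_and,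
    Nat.reduceLT, Nat.reduceLeDiff, and_iff_right, if_true, if_false, zero_add, add_zero]
  omega

/-- The second column of `ψ T`, where `a = m 2`, `b = m 3` and `W`, `E`, `F` are the entries of
`T` at `(0, 2)`, `(1, 1)`, `(2, 0)`. -/
def secondColumn (a b W E F : ℕ) : ℕ × ℕ × ℕ :=
  if b < F then (if b < E then (W, E, F) else (E, W, F))
  else if b < E then (if a < F then (W, F, E) else (F, W, E))
  else if a < F then (E, F, W) else (F, E, W)

section SecondColumn

variable {a b W E F : ℕ}

theorem secondColumn_cases (a b W E F : ℕ) :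
    b < F ∧ b < E ∧ secondColumn a b W E F = (W, E, F) ∨
    b < F ∧ E ≤ b ∧ secondColumn a b W E F = (E, W, F) ∨
    F ≤ b ∧ b < E ∧ a < F ∧ secondColumn a b W E F = (W, F, E) ∨
    F ≤ b ∧ b < E ∧ F ≤ a ∧ secondColumn a b W E F = (F, W, E) ∨
    F ≤ b ∧ E ≤ b ∧ a < F ∧ secondColumn a b W E F = (E, F, W) ∨
    F ≤ b ∧ E ≤ b ∧ F ≤ a ∧ secondColumn a b W E F = (F, E, W) := by
  unfold secondColumn
  split_ifs <;> simp only [and_true] <;> omega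

theorem secondColumn_mem_iff (v : ℕ) :
    v = (secondColumn a b W E F).1 ∨ v = (secondColumn a b W E F).2.1 ∨
        v = (secondColumn a b W E F).2.2 ↔ v = W ∨ v = E ∨ v = F := by
  rcases secondColumn_cases a b W E F with ⟨-, -, h⟩ | ⟨-, -, h⟩ | ⟨-, -, -, h⟩ | ⟨-, -, -, h⟩ |
    ⟨-, -, -, h⟩ | ⟨-, -, -, h⟩ <;> rw [h] <;> tauto

theorem secondColumn_lt (hab : a ≤ b) (hW : b < W) (hE : a < E) :
    a < (secondColumn a b W E F).2.1 ∧ b < (secondColumn a b W E F).2.2 := by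
  rcases secondColumn_cases a b W E F with ⟨_, _, h⟩ | ⟨_, _, h⟩ | ⟨_, _, _, h⟩ | ⟨_, _, _, h⟩ |
    ⟨_, _, _, h⟩ | ⟨_, _, _, h⟩ <;> rw [h] <;> dsimp only <;> omega

theorem secondColumn_pairwise_ne (hWE : W ≠ E) (hWF : W ≠ F) (hEF : E ≠ F) :
    (secondColumn a b W E F).1 ≠ (secondColumn a b W E F).2.1 ∧
      (secondColumn a b W E F).1 ≠ (secondColumn a b W E F).2.2 ∧
      (secondColumn a b W E F).2.1 ≠ (secondColumn a b W E F).2.2 := by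
  rcases secondColumn_cases a b W E F with ⟨-, -, h⟩ | ⟨-, -, h⟩ | ⟨-, -, -, h⟩ | ⟨-, -, -, h⟩ |
    ⟨-, -, -, h⟩ | ⟨-, -, -, h⟩ <;> rw [h] <;> dsimp only <;> omega

theorem secondColumn_injective {W' E' F' : ℕ} (hW : b < W) (hE : a < E) (hW' : b < W')
    (hE' : a < E') (h : secondColumn a b W E F = secondColumn a b W' E' F') :
    W = W' ∧ E = E' ∧ F = F' := by
  unfold secondColumn at h
  split_ifs at h <;> simp only [Prod.mk.injEq] at h <;> omega

theorem secondColumn_ascents (hab : a ≤ b) (hW : b < W) (hE : a < E) :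
    ascents (secondColumn a b W E F) = ascents (W, E, F) + (if F ≤ a then 1 else 0) +
      (if E ≤ b then 1 else 0) + (if F ≤ b then 1 else 0) := by
  unfold ascents
  rcases secondColumn_cases a b W E F with ⟨_, _, h⟩ | ⟨_, _, h⟩ | ⟨_, _, _, h⟩ | ⟨_, _, _, h⟩ |
    ⟨_, _, _, h⟩ | ⟨_, _, _, h⟩ <;>
    simp (disch := omega) only [h, if_pos, if_neg] <;> omega

end SecondColumn

namespace PTab

variable {n : ℕ} {m : ℕ → ℕ} {sh : List ℕ}

theorem entry_injective : Function.Injective (entry : PTab n m sh → ℕ → ℕ → ℕ) := by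
  rintro ⟨⟩ ⟨⟩ rfl
  rfl

theorem entry_ne_entry (T : PTab n m sh) {i j i' j' : ℕ} (h : j < sh.getD i 0)
    (h' : j' < sh.getD i' 0) (hne : (i, j) ≠ (i', j')) : T.entry i j ≠ T.entry i' j' := by
  intro heq
  obtain ⟨rfl, rfl⟩ := T.inj _ _ _ _ h h' heq
  exact hne rfl

open Classical in
noncomputable def row (T : PTab n m sh) (v : ℕ) : ℕ :=
  if h : ∃ p : ℕ × ℕ, p.2 < sh.getD p.1 0 ∧ T.entry p.1 p.2 = v then h.choose.1 else 0

theorem row_entry (T : PTab n m sh) {i j : ℕ} (h : j < sh.getD i 0) :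
    T.row (T.entry i j) = i := by
  have hex : ∃ p : ℕ × ℕ, p.2 < sh.getD p.1 0 ∧ T.entry p.1 p.2 = T.entry i j :=
    ⟨(i, j), h, rfl⟩
  rw [row, dif_pos hex]
  exact (T.inj _ _ _ _ hex.choose_spec.1 h hex.choose_spec.2).1

theorem invG_eq_card_inversions (hm : ∀ v ∈ Icc 1 n, v ≤ m v) (T : PTab n m sh) :
    invG T = #(inversions m T.row (Icc 1 n)) := by
  rw [← Nat.card_eq_finsetCard]
  refine Nat.card_congr (Equiv.ofBijective
    (fun c => ⟨(T.entry c.1.1.1 c.1.1.2, T.entry c.1.2.1 c.1.2.2), ?_⟩) ⟨?_, ?_⟩)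
  · obtain ⟨c, h1, h2, hrow, hlt, hinc⟩ := c
    have hu := T.mem_inside _ _ h1
    have hv := T.mem_inside _ _ h2
    rw [incomp_iff_le_of_lt hlt (hm _ hv)] at hinc
    simp only [inversions, mem_filter, mem_product]
    exact ⟨⟨hu, hv⟩, hlt, hinc, by rwa [T.row_entry h1, T.row_entry h2]⟩
  · intro ⟨⟨⟨i, j⟩, ⟨i', j'⟩⟩, h1, h2, _⟩ ⟨⟨⟨k, l⟩, ⟨k', l'⟩⟩, g1, g2, _⟩ h
    simp only [Subtype.mk.injEq, Prod.mk.injEq] at h ⊢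
    exact ⟨T.inj _ _ _ _ h1 g1 h.1, T.inj _ _ _ _ h2 g2 h.2⟩
  · rintro ⟨⟨u, v⟩, huv⟩
    simp only [inversions, mem_filter, mem_product] at huv
    obtain ⟨⟨hu, hv⟩, hlt, hle, hrow⟩ := huv
    obtain ⟨i, j, hij, rfl⟩ := T.surj u hu
    obtain ⟨i', j', hij', rfl⟩ := T.surj v hv
    rw [T.row_entry hij, T.row_entry hij'] at hrow
    exact ⟨⟨((i, j), (i', j')), hij, hij', hrow, hlt,
      (incomp_iff_le_of_lt hlt (hm _ hv)).2 hle⟩, rfl⟩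

end PTab

theorem lt_getD_replicate_one {k i j : ℕ} :
    j < (List.replicate k 1).getD i 0 ↔ i < k ∧ j = 0 := by
  rw [List.getD_eq_getElem?_getD, List.getElem?_replicate]
  split_ifs <;> simp [*]

abbrev shape32 (n : ℕ) : List ℕ := 3 :: 2 :: List.replicate (n - 5) 1

abbrev shape222 (n : ℕ) : List ℕ := 2 :: 2 :: 2 :: List.replicate (n - 6) 1

theorem lt_getD_shape32 {n i j : ℕ} :
    j < (shape32 n).getD i 0 ↔ i = 0 ∧ j < 3 ∨ i = 1 ∧ j < 2 ∨ 2 ≤ i ∧ i < n - 3 ∧ j = 0 := by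
  rcases i with _ | _ | i <;>
    simp only [List.getD_cons_succ, List.getD_cons_zero, lt_getD_replicate_one, true_and] <;>
    omega

theorem lt_getD_shape222 {n i j : ℕ} :
    j < (shape222 n).getD i 0 ↔ i < 3 ∧ j < 2 ∨ 3 ≤ i ∧ i < n - 3 ∧ j = 0 := by
  rcases i with _ | _ | _ | i <;>
    simp only [List.getD_cons_succ, List.getD_cons_zero, lt_getD_replicate_one] <;>
    omega

namespace PTab

variable {n : ℕ} {m : ℕ → ℕ} (T : PTab n m (shape32 n))

def topValues : Finset ℕ :=
  {T.entry 0 0, T.entry 0 1, T.entry 0 2, T.entry 1 0, T.entry 1 1, T.entry 2 0}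

theorem entry_mem_topValues {i j : ℕ} (hi : i < 3) (hj : j < (shape32 n).getD i 0) :
    T.entry i j ∈ T.topValues := by
  rw [lt_getD_shape32] at hj
  obtain ⟨rfl, hj⟩ | ⟨rfl, hj⟩ | ⟨hi2, -, rfl⟩ := hj
  · interval_cases j <;> simp [topValues]
  · interval_cases j <;> simp [topValues]
  · obtain rfl : i = 2 := by omega
    simp [topValues]

theorem topValues_subset_Icc (hn : 6 ≤ n) : T.topValues ⊆ Icc 1 n := by
  intro v hv
  simp only [topValues, mem_insert, mem_singleton] at hv
  rcases hv with rfl | rfl | rfl | rfl | rfl | rfl <;>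
    exact T.mem_inside _ _ (lt_getD_shape32.2 (by omega))

theorem row_lt_three_of_mem_topValues (hn : 6 ≤ n) {v : ℕ} (hv : v ∈ T.topValues) :
    T.row v < 3 := by
  simp only [topValues, mem_insert, mem_singleton] at hv
  rcases hv with rfl | rfl | rfl | rfl | rfl | rfl <;>
    rw [T.row_entry (lt_getD_shape32.2 (by omega))] <;> omega

theorem entry_not_mem_topValues (hn : 6 ≤ n) {i : ℕ} (hi : 3 ≤ i) (hin : i < n - 3) :
    T.entry i 0 ∉ T.topValues := fun h => by
  have := T.row_lt_three_of_mem_topValues hn h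
  rw [T.row_entry (lt_getD_shape32.2 (by omega))] at this
  omega

theorem exists_tail_of_not_mem_topValues {v : ℕ} (hv : v ∈ Icc 1 n) (hvS : v ∉ T.topValues) :
    ∃ i, 3 ≤ i ∧ i < n - 3 ∧ T.entry i 0 = v := by
  obtain ⟨i, j, hij, rfl⟩ := T.surj v hv
  by_cases hi : i < 3
  · exact absurd (T.entry_mem_topValues hi hij) hvS
  · rw [lt_getD_shape32] at hij
    obtain rfl : j = 0 := by omega
    exact ⟨i, by omega, by omega, rfl⟩

theorem entries_shape32 (hm : SeqHyp n m) (h23 : 3 ≤ m 2) :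
    T.entry 0 0 = 1 ∧ T.entry 0 1 = 3 ∧ T.entry 1 0 = 2 ∧
      m 3 < T.entry 0 2 ∧ m 2 < T.entry 1 1 := by
  have mem : ∀ i j, j < (shape32 n).getD i 0 → 1 ≤ T.entry i j ∧ T.entry i j ≤ n :=
    fun i j h => mem_Icc.1 (T.mem_inside i j h)
  have r01 := T.rows 0 0 1 (by omega) (by simp)
  have r12 := T.rows 0 1 2 (by omega) (by simp)
  have r10 := T.rows 1 0 1 (by omega) (by simp)
  have h01le := hm.le_three_of_ltP (mem 0 1 (by simp)).2 (mem 0 2 (by simp)).2 r12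
  have h10le := hm.le_three_of_ltP (mem 1 0 (by simp)).2 (mem 1 1 (by simp)).2 r10
  unfold ltP at r01 r12 r10
  -- `T.entry 0 0 ≥ 2` would give `m (T.entry 0 0) ≥ m 2 ≥ 3 ≥ T.entry 0 1`.
  have h00 : T.entry 0 0 = 1 := by
    by_contra h
    have := hm.apply_mono (i := 2) (j := T.entry 0 0) (by omega)
      (by have := mem 0 0 (by simp); omega) (mem 0 0 (by simp)).2
    omega
  rw [h00, hm.1] at r01
  obtain h01 : T.entry 0 1 = 3 := by omega
  have hne1 := T.entry_ne_entry (i := 1) (j := 0) (i' := 0) (j' := 0) (by simp) (by simp) (by simp)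
  have hne3 := T.entry_ne_entry (i := 1) (j := 0) (i' := 0) (j' := 1) (by simp) (by simp) (by simp)
  have := mem 1 0 (by simp)
  obtain h10 : T.entry 1 0 = 2 := by omega
  rw [h01] at r12
  rw [h10] at r10
  exact ⟨h00, h01, h10, r12, r10⟩

theorem big_entries_shape32 (hn : 6 ≤ n) (hm : SeqHyp n m) (h23 : 3 ≤ m 2) :
    4 ≤ T.entry 0 2 ∧ 4 ≤ T.entry 1 1 ∧ 4 ≤ T.entry 2 0 ∧ T.entry 0 2 ≠ T.entry 1 1 ∧
      T.entry 0 2 ≠ T.entry 2 0 ∧ T.entry 1 1 ≠ T.entry 2 0 := by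
  obtain ⟨h00, h01, h10, hW, hE⟩ := T.entries_shape32 hm h23
  have ne : ∀ i j i' j', j < (shape32 n).getD i 0 → j' < (shape32 n).getD i' 0 →
      (i, j) ≠ (i', j') → T.entry i j ≠ T.entry i' j' := fun _ _ _ _ => T.entry_ne_entry
  have hF : 0 < (shape32 n).getD 2 0 := lt_getD_shape32.2 (by omega)
  have hF1 := ne 2 0 0 0 hF (by simp) (by simp)
  have hF2 := ne 2 0 1 0 hF (by simp) (by simp)
  have hF3 := ne 2 0 0 1 hF (by simp) (by simp)
  have hF0 := (mem_Icc.1 (T.mem_inside 2 0 hF)).1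
  have hm23 := hm.apply_two_le_apply_three (by omega)
  exact ⟨by omega, by omega, by omega, ne 0 2 1 1 (by simp) (by simp) (by simp),
    ne 0 2 2 0 (by simp) hF (by simp), ne 1 1 2 0 (by simp) hF (by simp)⟩

theorem eq_of_big_entries_eq (hm : SeqHyp n m) (h23 : 3 ≤ m 2) {T T' : PTab n m (shape32 n)}
    (hW : T.entry 0 2 = T'.entry 0 2) (hE : T.entry 1 1 = T'.entry 1 1)
    (hF : T.entry 2 0 = T'.entry 2 0) (htail : ∀ i, 3 ≤ i → T.entry i 0 = T'.entry i 0) :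
    T = T' := by
  obtain ⟨h00, h01, h10, -⟩ := T.entries_shape32 hm h23
  obtain ⟨h00', h01', h10', -⟩ := T'.entries_shape32 hm h23
  apply entry_injective
  funext i j
  by_cases hc : j < (shape32 n).getD i 0
  · rw [lt_getD_shape32] at hc
    rcases hc with ⟨rfl, hj⟩ | ⟨rfl, hj⟩ | ⟨hi, -, rfl⟩
    · interval_cases j
      exacts [h00.trans h00'.symm, h01.trans h01'.symm, hW]
    · interval_cases j
      exacts [h10.trans h10'.symm, hE]
    · rcases (show i = 2 ∨ 3 ≤ i by omega) with rfl | hi3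
      exacts [hF, htail i hi3]
  · rw [T.zero_outside i j (not_lt.1 hc), T'.zero_outside i j (not_lt.1 hc)]

def psiColumn : ℕ × ℕ × ℕ :=
  secondColumn (m 2) (m 3) (T.entry 0 2) (T.entry 1 1) (T.entry 2 0)

def psiEntry : ℕ → ℕ → ℕ
  | 0, 0 => 1
  | 1, 0 => 2
  | 2, 0 => 3
  | 0, 1 => T.psiColumn.1
  | 1, 1 => T.psiColumn.2.1
  | 2, 1 => T.psiColumn.2.2
  | i + 3, j => T.entry (i + 3) j
  | _, _ => 0

variable {T}

theorem psiEntry_of_three_le {i : ℕ} (j : ℕ) (hi : 3 ≤ i) : T.psiEntry i j = T.entry i j := by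
  obtain ⟨i, rfl⟩ := Nat.exists_eq_add_of_le' hi
  rfl

theorem topValues_eq (hm : SeqHyp n m) (h23 : 3 ≤ m 2) :
    T.topValues = {1, 2, 3, T.entry 0 2, T.entry 1 1, T.entry 2 0} := by
  obtain ⟨h00, h01, h10, -⟩ := T.entries_shape32 hm h23
  ext v
  simp only [topValues, h00, h01, h10, mem_insert, mem_singleton]
  tauto

theorem topValues_eq_psiColumn (hm : SeqHyp n m) (h23 : 3 ≤ m 2) :
    T.topValues = {1, 2, 3, T.psiColumn.1, T.psiColumn.2.1, T.psiColumn.2.2} := by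
  rw [topValues_eq hm h23]
  ext v
  simp only [mem_insert, mem_singleton, psiColumn, secondColumn_mem_iff]

theorem psiEntry_mem_topValues (hm : SeqHyp n m) (h23 : 3 ≤ m 2) {i j : ℕ} (hi : i < 3)
    (hj : j < 2) :
    T.psiEntry i j ∈ T.topValues := by
  rw [topValues_eq_psiColumn hm h23]
  interval_cases i <;> interval_cases j <;> simp [psiEntry]

theorem exists_psiEntry_eq_of_mem_topValues (hm : SeqHyp n m) (h23 : 3 ≤ m 2) {v : ℕ}
    (hv : v ∈ T.topValues) : ∃ i j, i < 3 ∧ j < 2 ∧ T.psiEntry i j = v := by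
  rw [topValues_eq_psiColumn hm h23] at hv
  simp only [mem_insert, mem_singleton] at hv
  rcases hv with rfl | rfl | rfl | rfl | rfl | rfl
  exacts [⟨0, 0, by simp, by simp, rfl⟩, ⟨1, 0, by simp, by simp, rfl⟩,
    ⟨2, 0, by simp, by simp, rfl⟩, ⟨0, 1, by simp, by simp, rfl⟩,
    ⟨1, 1, by simp, by simp, rfl⟩, ⟨2, 1, by simp, by simp, rfl⟩]

theorem psiColumn_mem (hn : 6 ≤ n) (hm : SeqHyp n m) (h23 : 3 ≤ m 2) {v : ℕ}
    (hv : v = T.psiColumn.1 ∨ v = T.psiColumn.2.1 ∨ v = T.psiColumn.2.2) :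
    4 ≤ v ∧ v ≤ n ∧ m v = n := by
  obtain ⟨hW4, hE4, hF4, -⟩ := T.big_entries_shape32 hn hm h23
  have hle : ∀ v ∈ T.topValues, v ≤ n := fun v hv => (mem_Icc.1 (T.topValues_subset_Icc hn hv)).2
  have hv4 : 4 ≤ v ∧ v ≤ n := by
    rcases (secondColumn_mem_iff v).1 hv with rfl | rfl | rfl <;>
      exact ⟨by omega, hle _ (by simp [topValues])⟩
  exact ⟨hv4.1, hv4.2, hm.apply_eq hv4.1 hv4.2⟩

theorem psiColumn_lt (hm : SeqHyp n m) (h23 : 3 ≤ m 2) (hn : 3 ≤ n) :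
    m 2 < T.psiColumn.2.1 ∧ m 3 < T.psiColumn.2.2 := by
  obtain ⟨-, -, -, hW, hE⟩ := T.entries_shape32 hm h23
  exact secondColumn_lt (hm.apply_two_le_apply_three hn) hW hE

theorem psiColumn_pairwise_ne (hn : 6 ≤ n) (hm : SeqHyp n m) (h23 : 3 ≤ m 2) :
    T.psiColumn.1 ≠ T.psiColumn.2.1 ∧ T.psiColumn.1 ≠ T.psiColumn.2.2 ∧
      T.psiColumn.2.1 ≠ T.psiColumn.2.2 := by
  obtain ⟨-, -, -, hWE, hWF, hEF⟩ := T.big_entries_shape32 hn hm h23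
  exact secondColumn_pairwise_ne hWE hWF hEF

theorem psiEntry_inj (hn : 6 ≤ n) (hm : SeqHyp n m) (h23 : 3 ≤ m 2) {i j i' j' : ℕ}
    (h : j < (shape222 n).getD i 0) (h' : j' < (shape222 n).getD i' 0)
    (heq : T.psiEntry i j = T.psiEntry i' j') : i = i' ∧ j = j' := by
  rw [lt_getD_shape222] at h h'
  rcases h with ⟨hi, hj⟩ | ⟨hi, hin, rfl⟩ <;> rcases h' with ⟨hi', hj'⟩ | ⟨hi', hin', rfl⟩
  · obtain ⟨h1, -⟩ := psiColumn_mem hn hm h23 (T := T) (Or.inl rfl)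
    obtain ⟨h2, -⟩ := psiColumn_mem hn hm h23 (T := T) (Or.inr (Or.inl rfl))
    obtain ⟨h3, -⟩ := psiColumn_mem hn hm h23 (T := T) (Or.inr (Or.inr rfl))
    obtain ⟨h12, h13, h23⟩ := psiColumn_pairwise_ne (T := T) hn hm h23
    interval_cases i <;> interval_cases j <;> interval_cases i' <;> interval_cases j' <;>
      simp only [psiEntry] at heq <;> omega
  · rw [psiEntry_of_three_le _ hi'] at heq
    exact absurd (heq ▸ psiEntry_mem_topValues hm h23 hi hj)
      (T.entry_not_mem_topValues hn hi' hin')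
  · rw [psiEntry_of_three_le _ hi] at heq
    exact absurd (heq ▸ psiEntry_mem_topValues hm h23 hi' hj')
      (T.entry_not_mem_topValues hn hi hin)
  · rw [psiEntry_of_three_le _ hi, psiEntry_of_three_le _ hi'] at heq
    exact T.inj i 0 i' 0 (lt_getD_shape32.2 (by omega)) (lt_getD_shape32.2 (by omega)) heq

theorem psiEntry_cols (hn : 6 ≤ n) (hm : SeqHyp n m) (h23 : 3 ≤ m 2) {i j : ℕ}
    (h : j < (shape222 n).getD (i + 1) 0) :
    ¬ltP m (T.psiEntry (i + 1) j) (T.psiEntry i j) := by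
  rw [lt_getD_shape222] at h
  rcases h with ⟨hi, hj⟩ | ⟨hi, hin, rfl⟩
  · obtain ⟨-, hx1, -⟩ := psiColumn_mem hn hm h23 (T := T) (Or.inl rfl)
    obtain ⟨-, hx2, hmx2⟩ := psiColumn_mem hn hm h23 (T := T) (Or.inr (Or.inl rfl))
    obtain ⟨-, -, hmx3⟩ := psiColumn_mem hn hm h23 (T := T) (Or.inr (Or.inr rfl))
    have hm23 := hm.apply_two_le_apply_three (by omega)
    obtain hi : i < 2 := by omega
    interval_cases i <;> interval_cases j <;> simp only [psiEntry, ltP] <;> omega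
  · by_cases hi2 : i = 2
    · subst hi2
      -- in `T` this value lies below `F ≥ 4`
      obtain ⟨-, -, hF, -⟩ := T.big_entries_shape32 hn hm h23
      have := T.cols 2 0 (lt_getD_shape32.2 (by omega))
      rw [psiEntry_of_three_le _ le_rfl]
      simp only [psiEntry, ltP, Nat.reduceAdd] at this ⊢
      omega
    · rw [psiEntry_of_three_le _ hi, psiEntry_of_three_le _ (by omega)]
      exact T.cols i 0 (lt_getD_shape32.2 (by omega))

def psi (hn : 6 ≤ n) (hm : SeqHyp n m) (h23 : 3 ≤ m 2) (T : PTab n m (shape32 n)) :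
    PTab n m (shape222 n) where
  entry := T.psiEntry
  zero_outside i j h := by
    rw [← not_lt, lt_getD_shape222] at h
    by_cases hi : 3 ≤ i
    · rw [psiEntry_of_three_le _ hi]
      exact T.zero_outside i j (by rw [← not_lt, lt_getD_shape32]; omega)
    · interval_cases i <;> rcases j with _ | _ | j <;> first | omega | rfl
  mem_inside i j h := by
    rw [lt_getD_shape222] at h
    rcases h with ⟨hi, hj⟩ | ⟨hi, hin, rfl⟩
    · exact T.topValues_subset_Icc hn (psiEntry_mem_topValues hm h23 hi hj)
    · rw [psiEntry_of_three_le _ hi]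
      exact T.mem_inside i 0 (lt_getD_shape32.2 (by omega))
  inj _ _ _ _ h h' := psiEntry_inj hn hm h23 h h'
  surj v hv := by
    by_cases hvS : v ∈ T.topValues
    · obtain ⟨i, j, hi, hj, rfl⟩ := exists_psiEntry_eq_of_mem_topValues hm h23 hvS
      exact ⟨i, j, lt_getD_shape222.2 (by omega), rfl⟩
    · obtain ⟨i, hi, hin, rfl⟩ := T.exists_tail_of_not_mem_topValues hv hvS
      exact ⟨i, 0, lt_getD_shape222.2 (by omega), psiEntry_of_three_le _ hi⟩
  rows i j j' hjj' hj' := by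
    rw [lt_getD_shape222] at hj'
    obtain ⟨rfl, rfl, hi⟩ : j = 0 ∧ j' = 1 ∧ i < 3 := by omega
    obtain ⟨h1, -⟩ := psiColumn_mem hn hm h23 (T := T) (Or.inl rfl)
    obtain ⟨h2, h3⟩ := psiColumn_lt (T := T) hm h23 (by omega)
    have hm1 := hm.1
    interval_cases i <;> simp only [psiEntry, ltP] <;> omega
  cols _ _ h := psiEntry_cols hn hm h23 h

theorem psi_injective (hn : 6 ≤ n) (hm : SeqHyp n m) (h23 : 3 ≤ m 2) :
    Function.Injective (psi hn hm h23) := by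
  intro T T' h
  have he : T.psiEntry = T'.psiEntry := congrArg PTab.entry h
  have hcol : T.psiColumn = T'.psiColumn :=
    Prod.ext (congrFun (congrFun he 0) 1)
      (Prod.ext (congrFun (congrFun he 1) 1) (congrFun (congrFun he 2) 1))
  obtain ⟨-, -, -, hW, hE⟩ := T.entries_shape32 hm h23
  obtain ⟨-, -, -, hW', hE'⟩ := T'.entries_shape32 hm h23
  obtain ⟨hW, hE, hF⟩ := secondColumn_injective hW hE hW' hE' hcol
  refine eq_of_big_entries_eq hm h23 hW hE hF fun i hi => ?_
  rw [← psiEntry_of_three_le 0 hi, ← psiEntry_of_three_le 0 hi, he]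

theorem row_psi_lt_three (hn : 6 ≤ n) (hm : SeqHyp n m) (h23 : 3 ≤ m 2) {s : ℕ}
    (hs : s ∈ T.topValues) : (psi hn hm h23 T).row s < 3 := by
  obtain ⟨i, j, hi, hj, rfl⟩ := exists_psiEntry_eq_of_mem_topValues hm h23 hs
  rw [show T.psiEntry i j = (psi hn hm h23 T).entry i j from rfl,
    row_entry _ (lt_getD_shape222.2 (by omega))]
  exact hi

theorem row_psi_of_not_mem_topValues (hn : 6 ≤ n) (hm : SeqHyp n m) (h23 : 3 ≤ m 2) {v : ℕ}
    (hv : v ∈ Icc 1 n) (hvS : v ∉ T.topValues) :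
    (psi hn hm h23 T).row v = T.row v ∧ 3 ≤ T.row v := by
  obtain ⟨i, hi, hin, rfl⟩ := T.exists_tail_of_not_mem_topValues hv hvS
  have hψ := (psi hn hm h23 T).row_entry (i := i) (j := 0) (lt_getD_shape222.2 (by omega))
  rw [show (psi hn hm h23 T).entry i 0 = T.entry i 0 from psiEntry_of_three_le _ hi] at hψ
  rw [hψ, T.row_entry (lt_getD_shape32.2 (by omega))]
  exact ⟨rfl, hi⟩

theorem card_inversions_row_topValues (hn : 6 ≤ n) (hm : SeqHyp n m) (h23 : 3 ≤ m 2) :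
    #(inversions m T.row T.topValues) = 1 + (if T.entry 2 0 ≤ m 2 then 1 else 0) +
      (if T.entry 1 1 ≤ m 3 then 1 else 0) + (if T.entry 2 0 ≤ m 3 then 1 else 0) +
      ascents (T.entry 0 2, T.entry 1 1, T.entry 2 0) := by
  obtain ⟨h00, h01, h10, -⟩ := T.entries_shape32 hm h23
  obtain ⟨hW4, hE4, hF4, hWE, hWF, hEF⟩ := T.big_entries_shape32 hn hm h23
  have hle : ∀ v ∈ T.topValues, v ≤ n := fun v hv => (mem_Icc.1 (T.topValues_subset_Icc hn hv)).2
  have hrow : ∀ i j, j < (shape32 n).getD i 0 → T.row (T.entry i j) = i :=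
    fun _ _ => T.row_entry
  have hWn := hle (T.entry 0 2) (by simp [topValues])
  have hEn := hle (T.entry 1 1) (by simp [topValues])
  have hFn := hle (T.entry 2 0) (by simp [topValues])
  rw [topValues_eq hm h23, card_inversions_six (k := 0) hm.1 h23 hW4 hE4 hF4 hEn hFn
    (hm.apply_eq hW4 hWn) (hm.apply_eq hE4 hEn) hWE hWF hEF
    (h00 ▸ hrow 0 0 (by simp)) (h10 ▸ hrow 1 0 (by simp)) (h01 ▸ hrow 0 1 (by simp))
    (hrow 0 2 (by simp)) (hrow 1 1 (by simp)) (hrow 2 0 (lt_getD_shape32.2 (by omega)))]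
  simp only [Nat.reduceLT, and_true, ↓reduceIte, add_zero]

theorem card_inversions_psi_row_topValues (hn : 6 ≤ n) (hm : SeqHyp n m) (h23 : 3 ≤ m 2) :
    #(inversions m (psi hn hm h23 T).row T.topValues) = 2 + ascents T.psiColumn := by
  obtain ⟨hx1, -, hmx1⟩ := psiColumn_mem hn hm h23 (T := T) (Or.inl rfl)
  obtain ⟨hx2, hx2n, hmx2⟩ := psiColumn_mem hn hm h23 (T := T) (Or.inr (Or.inl rfl))
  obtain ⟨hx3, hx3n, -⟩ := psiColumn_mem hn hm h23 (T := T) (Or.inr (Or.inr rfl))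
  obtain ⟨hx12, hx13, hx23⟩ := psiColumn_pairwise_ne (T := T) hn hm h23
  have hx3m := (psiColumn_lt (T := T) hm h23 (by omega)).2
  have hm23 := hm.apply_two_le_apply_three (by omega)
  have hrow : ∀ i j, j < (shape222 n).getD i 0 → (psi hn hm h23 T).row (T.psiEntry i j) = i :=
    fun _ _ => (psi hn hm h23 T).row_entry
  rw [topValues_eq_psiColumn hm h23, card_inversions_six (k := 2) hm.1 h23 hx1 hx2 hx3 hx2n hx3n
    hmx1 hmx2 hx12 hx13 hx23 (hrow 0 0 (by simp)) (hrow 1 0 (by simp)) (hrow 2 0 (by simp))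
    (hrow 0 1 (by simp)) (hrow 1 1 (by simp)) (hrow 2 1 (by simp))]
  simp only [Nat.reduceLT, and_false, ↓reduceIte, Prod.mk.eta, Nat.not_le.mpr (hm23.trans_lt hx3m)]

theorem invG_psi (hn : 6 ≤ n) (hm : SeqHyp n m) (h23 : 3 ≤ m 2) (T : PTab n m (shape32 n)) :
    invG (psi hn hm h23 T) = invG T + 1 := by
  have hself : ∀ v ∈ Icc 1 n, v ≤ m v := fun v hv => hm.self_le (mem_Icc.1 hv).1 (mem_Icc.1 hv).2
  rw [invG_eq_card_inversions hself, invG_eq_card_inversions hself]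
  have hsplit := card_inversions_add_card_inversions (m := m) (r := T.row)
    (r' := (psi hn hm h23 T).row) (T.topValues_subset_Icc hn)
    (fun s hs => ⟨T.row_lt_three_of_mem_topValues hn hs, row_psi_lt_three hn hm h23 hs⟩)
    (fun v hv hvS => row_psi_of_not_mem_topValues hn hm h23 hv hvS)
  obtain ⟨-, -, -, hW, hE⟩ := T.entries_shape32 hm h23
  have hasc : ascents T.psiColumn = _ :=
    secondColumn_ascents (F := T.entry 2 0) (hm.apply_two_le_apply_three (by omega)) hW hE
  rw [card_inversions_row_topValues hn hm h23, card_inversions_psi_row_topValues hn hm h23]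
    at hsplit
  omega

end PTab

theorem ptab_injection_32_to_222_general (n : ℕ) (m : ℕ → ℕ) (hn : 6 ≤ n) (hm : SeqHyp n m)
    (h23 : 3 ≤ m 2) :
    ∃ ψ : PTab n m (3 :: 2 :: List.replicate (n - 5) 1) →
          PTab n m (2 :: 2 :: 2 :: List.replicate (n - 6) 1),
      Function.Injective ψ ∧ ∀ T, invG (ψ T) = invG T + 1 :=
  ⟨PTab.psi hn hm h23, PTab.psi_injective hn hm h23, PTab.invG_psi hn hm h23⟩

/-- For the natural unit interval order `P(m)` on `{1,…,n}` induced by `(2, m₂, m₃, n, …, n)`,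
with `2` incomparable to `3` and `3` incomparable to `4`, there is an injection `ψ` from the
`P(m)`-tableaux of shape `(3,2,1^{n-5})` to those of shape `(2,2,2,1^{n-6})` with
`inv_G (ψ T) = inv_G T + 1` for all `T`. -/
theorem ptab_injection_32_to_222 (n : ℕ) (m : ℕ → ℕ) (hn : 6 ≤ n) (hm : SeqHyp n m)
    (h23 : 3 ≤ m 2) (h34 : 4 ≤ m 3) :
    ∃ ψ : PTab n m (3 :: 2 :: List.replicate (n - 5) 1) →
          PTab n m (2 :: 2 :: 2 :: List.replicate (n - 6) 1),
      Function.Injective ψ ∧ ∀ T, invG (ψ T) = invG T + 1 :=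
  ptab_injection_32_to_222_general n m hn hm h23
end

section
/- Let G be a graph whose chromatic quasisymmetric function X̃_G(t) = Σ_i f_i t^i (f_i symmetric functions, top degree |E|) is palindromic (f_i = f_{|E|-i}) and Schur-unimodal (f_{i+1} - f_i Schur-positive for 0 ≤ i ≤ (|E|-1)/2). Suppose λ1, λ2 are partitions and there is an injection from P-tableaux of shape λ1 to P-tableaux of shape λ2 shifting the inversion statistic by a constant c. Then for every j, the number of P-tableaux of shape λ2 with j inversions is at least the number of P-tableaux of shape λ1 with j inversions. -/
/-!
Reflecting through the centre `E / 2` of palindromy turns the shift `j ↦ j + c` into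
`j ↦ j - c`, so the shift may be taken downward, `j ↦ j - |c|`. On the lower half
`2 j ≤ E` the unimodality of `S2` absorbs a downward shift, and palindromy carries the
inequality over to the upper half.
-/

namespace WeightShift

variable {α : Type*}

def Palindromic (E : ℤ) (f : ℤ → α) : Prop :=
  ∀ j, f (E - j) = f j

variable [LE α] {E c : ℤ} {f g : ℤ → α}

theorem Palindromic.le_sub_of_le_add (hf : Palindromic E f) (hg : Palindromic E g)
    (h : ∀ j, f j ≤ g (j + c)) (j : ℤ) : f j ≤ g (j - c) :=
  calc f j = f (E - j) := (hf j).symm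
    _ ≤ g (E - j + c) := h _
    _ = g (j - c) := by rw [show E - j + c = E - (j - c) by ring, hg]

theorem Palindromic.le_sub_abs_of_le_add (hf : Palindromic E f) (hg : Palindromic E g)
    (h : ∀ j, f j ≤ g (j + c)) (j : ℤ) : f j ≤ g (j - |c|) := by
  rcases abs_cases c with ⟨hc, -⟩ | ⟨hc, -⟩
  · rw [hc]
    exact hf.le_sub_of_le_add hg h j
  · rw [hc, sub_neg_eq_add]
    exact h j

theorem Palindromic.le_of_le_of_two_mul_le (hf : Palindromic E f) (hg : Palindromic E g)
    (h : ∀ j, 2 * j ≤ E → f j ≤ g j) (j : ℤ) : f j ≤ g j := by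
  rcases le_or_gt (2 * j) E with hj | hj
  · exact h j hj
  · rw [← hf j, ← hg j]
    exact h _ (by linarith)

end WeightShift

open WeightShift in
theorem weight_shift_injection_dominance_general (E : ℕ) (c : ℤ) (S1 S2 : ℤ → ℕ)
    (h1pal : ∀ j : ℤ, S1 ((E : ℤ) - j) = S1 j)
    (h2pal : ∀ j : ℤ, S2 ((E : ℤ) - j) = S2 j)
    (h2uni : ∀ j j' : ℤ, j ≤ j' → 2 * j' ≤ (E : ℤ) → S2 j ≤ S2 j')
    (hinj : ∀ j : ℤ, S1 j ≤ S2 (j + c)) :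
    ∀ j : ℤ, S1 j ≤ S2 j := by
  have hpal₁ : Palindromic E S1 := h1pal
  have hpal₂ : Palindromic E S2 := h2pal
  refine hpal₁.le_of_le_of_two_mul_le hpal₂ fun j hj => ?_
  calc S1 j ≤ S2 (j - |c|) := hpal₁.le_sub_abs_of_le_add hpal₂ hinj j
    _ ≤ S2 j := h2uni _ _ (by linarith [abs_nonneg c]) hj

/-- Suppose the sequences `S1 j`, `S2 j` (the numbers of `P`-tableaux of shapes `λ₁`, `λ₂`
with `j` inversions, i.e. the coefficients of `t^j` on the Schur functions `s_{λ₁}`, `s_{λ₂}`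
in a chromatic quasisymmetric function `X̃_G(t)` of top degree `|E|`) vanish outside `[0, E]`,
are palindromic (`S (E - j) = S j`, from `X̃_G(t) = t^{|E|} X̃_G(t⁻¹)`), and are unimodal on the
first half (`S j ≤ S j'` for `j ≤ j' ≤ E/2`, from Schur-unimodality). If there is an injection
shifting the inversion statistic by a constant `c`, so that `S1 j ≤ S2 (j + c)` for all `j`,
then `S1 j ≤ S2 j` for every `j`. -/
theorem weight_shift_injection_dominance (E : ℕ) (c : ℤ) (S1 S2 : ℤ → ℕ)
    (h1van : ∀ j : ℤ, j < 0 ∨ (E : ℤ) < j → S1 j = 0)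
    (h2van : ∀ j : ℤ, j < 0 ∨ (E : ℤ) < j → S2 j = 0)
    (h1pal : ∀ j : ℤ, S1 ((E : ℤ) - j) = S1 j)
    (h2pal : ∀ j : ℤ, S2 ((E : ℤ) - j) = S2 j)
    (h1uni : ∀ j j' : ℤ, j ≤ j' → 2 * j' ≤ (E : ℤ) → S1 j ≤ S1 j')
    (h2uni : ∀ j j' : ℤ, j ≤ j' → 2 * j' ≤ (E : ℤ) → S2 j ≤ S2 j')
    (hinj : ∀ j : ℤ, S1 j ≤ S2 (j + c)) :
    ∀ j : ℤ, S1 j ≤ S2 j :=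
  weight_shift_injection_dominance_general E c S1 S2 h1pal h2pal h2uni hinj
end

section
/- The monomial symmetric function m_{(2,2,1^{n-1})} of degree n+3 expands in the elementary basis as m_{(2,2,1^{n-1})} = e_{(n+1,2)} - (n+1) e_{(n+2,1)} + (n(n+3)/2) e_{(n+3)}. -/
/-!
A pair `(S, T)` with `#S = a`, `#T = b` contributes `x_{S ∩ T}^2 x_{S ∆ T}` to `e_a e_b`. Each
pair `(W, U)` of disjoint sets with `#W = j`, `#U = a + b - 2j` arises from exactly
`C(a + b - 2j, b - j)` such pairs (choose `T \ S` inside `U`), so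
`e_a e_b = ∑_{j ≤ b} C(a + b - 2j, b - j) m_{(2^j, 1^{a+b-2j})}`. For `(a, b) = (n+1, 2), (n+2, 1),
(n+3, 0)` this is a unitriangular system in `m_{(2^j, 1^{n+3-2j})}`, `j = 0, 1, 2`; inverting it
gives the formula.
-/

open Finset

namespace Multiset

variable {α : Type*}

lemma prod_map_nsmul_add {M : Type*} [CommMonoid M] (k : ℕ) (W U : Finset α) (f : α → M) :
    ((k • W.val + U.val).map f).prod = (∏ i ∈ W, f i) ^ k * ∏ i ∈ U, f i := by
  rw [map_add, map_nsmul, prod_add, prod_nsmul]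
  rfl

variable [DecidableEq α]

section
variable {W U : Finset α}

lemma count_two_nsmul_add (h : Disjoint W U) (x : α) :
    (2 • W.val + U.val).count x = if x ∈ W then 2 else if x ∈ U then 1 else 0 := by
  have : x ∈ W → x ∉ U := fun hW => Finset.disjoint_left.mp h hW
  rw [count_add, count_nsmul, count_eq_of_nodup W.nodup, count_eq_of_nodup U.nodup]
  grind

lemma dedup_map_count_two_nsmul_add (h : Disjoint W U) :
    (2 • W.val + U.val).dedup.map (count · (2 • W.val + U.val)) =
      replicate #W 2 + replicate #U 1 := by
  have hdedup : (2 • W.val + U.val).dedup = W.val + U.val := by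
    rw [← toFinset_val]
    change _ = (W.disjUnion U h).val
    congr 1
    ext x
    simp
  rw [hdedup, map_add, ← Finset.card_val W, ← Finset.card_val U, ← map_const', ← map_const']
  congr 1 <;> refine map_congr rfl fun x hx => ?_ <;> rw [count_two_nsmul_add h]
  · simp [Finset.mem_val.mp hx]
  · simp [Finset.mem_val.mp hx, Finset.disjoint_right.mp h (Finset.mem_val.mp hx)]

lemma filter_count_two_nsmul_add_eq_two (h : Disjoint W U) :
    {x ∈ (2 • W.val + U.val).toFinset | (2 • W.val + U.val).count x = 2} = W := by
  ext x
  have : x ∈ W → x ∉ U := fun hW => Finset.disjoint_left.mp h hW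
  simp only [Finset.mem_filter, mem_toFinset, count_two_nsmul_add h, mem_add, mem_nsmul,
    Finset.mem_val]
  grind

lemma filter_count_two_nsmul_add_eq_one (h : Disjoint W U) :
    {x ∈ (2 • W.val + U.val).toFinset | (2 • W.val + U.val).count x = 1} = U := by
  ext x
  have : x ∈ W → x ∉ U := fun hW => Finset.disjoint_left.mp h hW
  simp only [Finset.mem_filter, mem_toFinset, count_two_nsmul_add h, mem_add, mem_nsmul,
    Finset.mem_val]
  grind

end

section
variable {s : Multiset α}

lemma card_filter_count_eq (k : ℕ) :
    #{x ∈ s.toFinset | s.count x = k} = (s.dedup.map (count · s)).count k := by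
  rw [count_map, Finset.card_def, Finset.filter_val, toFinset_val]
  exact congrArg card (filter_congr fun _ _ => eq_comm)

lemma eq_two_nsmul_add_of_dedup_map_count {j m : ℕ}
    (hs : s.dedup.map (count · s) = replicate j 2 + replicate m 1) :
    s = 2 • {x ∈ s.toFinset | s.count x = 2}.val + {x ∈ s.toFinset | s.count x = 1}.val := by
  ext x
  rw [count_add, count_nsmul, count_eq_of_nodup (Finset.nodup _),
    count_eq_of_nodup (Finset.nodup _)]
  simp only [Finset.mem_val, Finset.mem_filter, mem_toFinset]
  by_cases hxs : x ∈ s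
  · have := mem_map_of_mem (count · s) (mem_dedup.mpr hxs)
    rw [hs, mem_add, mem_replicate, mem_replicate] at this
    grind
  · simp [hxs]

end

end Multiset

namespace Finset

variable {α : Type*} [DecidableEq α]

lemma prod_mul_prod_eq_sq_prod_inter_mul_prod_symmDiff {M : Type*} [CommMonoid M]
    (S T : Finset α) (f : α → M) :
    (∏ i ∈ S, f i) * ∏ i ∈ T, f i = (∏ i ∈ S ∩ T, f i) ^ 2 * ∏ i ∈ symmDiff S T, f i := by
  rw [← prod_union_inter, symmDiff_eq_sup_sdiff_inf,
    ← prod_sdiff (inter_subset_union (s := S) (t := T))]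
  simp only [sup_eq_union, inf_eq_inter, sq]
  ac_rfl

variable [Fintype α]

variable (α) in
def disjointPairs (j m : ℕ) : Finset (Finset α × Finset α) :=
  {q ∈ powersetCard j univ ×ˢ powersetCard m univ | Disjoint q.1 q.2}

lemma mem_disjointPairs {j m : ℕ} {q : Finset α × Finset α} :
    q ∈ disjointPairs α j m ↔ #q.1 = j ∧ #q.2 = m ∧ Disjoint q.1 q.2 := by
  simp [disjointPairs, and_assoc]

lemma card_filter_inter_symmDiff_eq_choose {W U : Finset α} (h : Disjoint W U) {k l : ℕ}
    (hU : #U = k + l) :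
    #{q ∈ powersetCard (#W + k) univ ×ˢ powersetCard (#W + l) univ |
        (q.1 ∩ q.2, symmDiff q.1 q.2) = (W, U)} = (k + l).choose l := by
  have hWU (x : α) : x ∈ W → x ∉ U := fun hx => disjoint_left.mp h hx
  rw [← hU, ← card_powersetCard]
  refine card_nbij' (fun q => q.2 \ q.1) (fun V => (W ∪ (U \ V), W ∪ V)) ?_ ?_ ?_ ?_
  · rintro ⟨S, T⟩ hq
    simp only [mem_coe, mem_filter, mem_product, mem_powersetCard_univ, Prod.mk.injEq] at hq
    obtain ⟨⟨hS, hT⟩, rfl, rfl⟩ := hq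
    rw [mem_coe, mem_powersetCard]
    refine ⟨fun x => by simp only [mem_sdiff, mem_symmDiff]; tauto, ?_⟩
    dsimp only
    rw [card_sdiff]
    omega
  · intro V hV
    obtain ⟨hVU, hV⟩ := mem_powersetCard.mp hV
    simp only [mem_coe, mem_filter, mem_product, mem_powersetCard_univ, Prod.mk.injEq]
    refine ⟨⟨?_, ?_⟩, ?_, ?_⟩
    · rw [card_union_of_disjoint (h.mono_right sdiff_subset), card_sdiff_of_subset hVU]
      omega
    · rw [card_union_of_disjoint (h.mono_right hVU), hV]
    · ext x; have := hWU x; have := @hVU x; simp only [mem_inter, mem_union, mem_sdiff]; tauto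
    · ext x; have := hWU x; have := @hVU x; simp only [mem_union, mem_sdiff, mem_symmDiff]; tauto
  · rintro ⟨S, T⟩ hq
    simp only [mem_coe, mem_filter, mem_product, mem_powersetCard_univ, Prod.mk.injEq] at hq
    obtain ⟨-, rfl, rfl⟩ := hq
    ext x <;> simp only [mem_inter, mem_union, mem_sdiff, mem_symmDiff] <;> tauto
  · intro V hV
    ext x; have := hWU x; have := @(mem_powersetCard.mp hV).1 x; simp only [mem_union, mem_sdiff]; tauto

end Finset

namespace MvPolynomial

variable (σ R : Type*) [Fintype σ] [DecidableEq σ] [CommSemiring R]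

/-- The monomial symmetric function `m_{(2^j, 1^m)}`, see `msymm_eq_msymmTwoOne`. -/
noncomputable def msymmTwoOne (j m : ℕ) : MvPolynomial σ R :=
  ∑ q ∈ disjointPairs σ j m, (∏ i ∈ q.1, X i) ^ 2 * ∏ i ∈ q.2, X i

variable {σ R}

lemma msymm_eq_msymmTwoOne {k j m : ℕ} (p : k.Partition)
    (hp : p.parts = Multiset.replicate j 2 + Multiset.replicate m 1) :
    msymm σ R p = msymmTwoOne σ R j m := by
  have hk : 2 * j + m = k := by simpa [hp, mul_comm] using p.parts_sum
  have hshape (s : {a : Sym σ k // Nat.Partition.ofSym a = p}) :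
      s.1.1.dedup.map (Multiset.count · s.1.1) = Multiset.replicate j 2 + Multiset.replicate m 1 :=
    (congrArg Nat.Partition.parts s.2).trans hp
  rw [msymm, msymmTwoOne]
  symm
  refine Finset.sum_bij'
    (fun q hq => ⟨⟨2 • q.1.val + q.2.val, ?card⟩, ?shape⟩)
    (fun s _ => ({x ∈ s.1.1.toFinset | s.1.1.count x = 2},
      {x ∈ s.1.1.toFinset | s.1.1.count x = 1}))
    (fun _ _ => mem_univ _) ?_ ?_ ?_ ?_
  case card =>
    obtain ⟨hW, hU, -⟩ := mem_disjointPairs.mp hq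
    simp [hW, hU, ← hk]
  case shape =>
    obtain ⟨hW, hU, hd⟩ := mem_disjointPairs.mp hq
    ext1
    exact (Multiset.dedup_map_count_two_nsmul_add hd).trans (by rw [hW, hU, hp])
  · intro s _
    refine mem_disjointPairs.mpr ⟨?_, ?_, disjoint_filter.mpr fun x _ h2 h1 => by omega⟩ <;>
      rw [Multiset.card_filter_count_eq, hshape s] <;> simp [Multiset.count_replicate]
  · intro q hq
    obtain ⟨-, -, hd⟩ := mem_disjointPairs.mp hq
    exact Prod.ext (Multiset.filter_count_two_nsmul_add_eq_two hd)
      (Multiset.filter_count_two_nsmul_add_eq_one hd)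
  · intro s _
    exact Subtype.ext (Sym.ext (Multiset.eq_two_nsmul_add_of_dedup_map_count (hshape s)).symm)
  · intro q _
    exact (Multiset.prod_map_nsmul_add 2 _ _ _).symm

lemma sum_prod_mul_prod_of_card_inter_eq (j k l : ℕ) :
    ∑ q ∈ powersetCard (j + k) (univ : Finset σ) ×ˢ powersetCard (j + l) univ with
        #(q.1 ∩ q.2) = j,
      (∏ i ∈ q.1, X i) * ∏ i ∈ q.2, (X i : MvPolynomial σ R) =
      (k + l).choose l • msymmTwoOne σ R j (k + l) := by
  have hmaps : ∀ q ∈ {q ∈ powersetCard (j + k) (univ : Finset σ) ×ˢ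
      powersetCard (j + l) (univ : Finset σ) | #(q.1 ∩ q.2) = j},
      (q.1 ∩ q.2, symmDiff q.1 q.2) ∈ disjointPairs σ j (k + l) := by
    intro q hq
    simp only [mem_filter, mem_product, mem_powersetCard_univ] at hq
    obtain ⟨⟨hS, hT⟩, hj⟩ := hq
    refine mem_disjointPairs.mpr ⟨hj, ?_, (disjoint_symmDiff_inf ..).symm⟩
    have := card_union_add_card_inter q.1 q.2
    simp only [symmDiff_eq_sup_sdiff_inf, sup_eq_union, inf_eq_inter]
    rw [card_sdiff_of_subset inter_subset_union]
    omega
  simp_rw [prod_mul_prod_eq_sq_prod_inter_mul_prod_symmDiff]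
  rw [← sum_fiberwise_of_maps_to' hmaps (fun y => (∏ i ∈ y.1, X i) ^ 2 * ∏ i ∈ y.2, X i),
    msymmTwoOne, smul_sum]
  refine sum_congr rfl fun ⟨W, U⟩ hy => ?_
  obtain ⟨rfl, hU, hd⟩ := mem_disjointPairs.mp hy
  rw [sum_const, filter_filter, ← card_filter_inter_symmDiff_eq_choose hd hU]
  congr 2
  refine filter_congr fun q _ => and_iff_right_of_imp fun hq => ?_
  rw [(Prod.mk.inj hq).1]

lemma esymm_mul_esymm {a b : ℕ} (hba : b ≤ a) :
    esymm σ R a * esymm σ R b =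
      ∑ j ∈ range (b + 1), (a + b - 2 * j).choose (b - j) • msymmTwoOne σ R j (a + b - 2 * j) := by
  have hmaps : ∀ q ∈ powersetCard a (univ : Finset σ) ×ˢ powersetCard b univ,
      #(q.1 ∩ q.2) ∈ range (b + 1) := by
    intro q hq
    rw [mem_product, mem_powersetCard_univ, mem_powersetCard_univ] at hq
    exact mem_range_succ_iff.mpr (hq.2 ▸ card_le_card inter_subset_right)
  rw [esymm, esymm, sum_mul_sum, ← sum_product', ← sum_fiberwise_of_maps_to hmaps]
  refine sum_congr rfl fun j hj => ?_
  have hjb := mem_range_succ_iff.mp hj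
  obtain ⟨k, rfl⟩ := Nat.exists_eq_add_of_le (hjb.trans hba)
  obtain ⟨l, rfl⟩ := Nat.exists_eq_add_of_le hjb
  rw [show j + k + (j + l) - 2 * j = k + l by omega, Nat.add_sub_cancel_left]
  exact sum_prod_mul_prod_of_card_inter_eq j k l

end MvPolynomial

open MvPolynomial in
/-- The monomial symmetric function `m_{(2,2,1^{n-1})}` of degree `n + 3` expands in the
elementary basis as
`m_{(2,2,1^{n-1})} = e_{(n+1,2)} - (n+1) e_{(n+2,1)} + (n(n+3)/2) e_{(n+3)}`. -/
theorem msymm_two_two_ones (n N : ℕ) (hn : 1 ≤ n) (p : Nat.Partition (n + 3))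
    (hp : p.parts = 2 ::ₘ 2 ::ₘ Multiset.replicate (n - 1) 1) :
    msymm (Fin N) ℚ p =
      esymm (Fin N) ℚ (n + 1) * esymm (Fin N) ℚ 2
        - ((n + 1 : ℕ) : ℚ) • (esymm (Fin N) ℚ (n + 2) * esymm (Fin N) ℚ 1)
        + (((n * (n + 3) : ℕ) : ℚ) / 2) • esymm (Fin N) ℚ (n + 3) := by
  have e2 := esymm_mul_esymm (σ := Fin N) (R := ℚ) (a := n + 1) (b := 2) (by omega)
  have e1 := esymm_mul_esymm (σ := Fin N) (R := ℚ) (a := n + 2) (b := 1) (by omega)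
  have e0 := esymm_mul_esymm (σ := Fin N) (R := ℚ) (a := n + 3) (b := 0) (by omega)
  simp only [sum_range_succ, sum_range_zero, zero_add, esymm_zero, mul_one, Nat.reduceMul,
    Nat.add_assoc, Nat.reduceAdd, Nat.reduceSubDiff, Nat.sub_zero, Nat.add_zero,
    Nat.choose_zero_right, Nat.choose_one_right, one_smul] at e2 e1 e0
  rw [msymm_eq_msymmTwoOne (j := 2) (m := n - 1) p (hp.trans rfl), e2, e1, e0]
  simp only [← Nat.cast_smul_eq_nsmul ℚ, Nat.cast_choose_two]
  push_cast
  match_scalars <;> ring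
end
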